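/- arXiv:1610.07178 — 12 statements merged into one kernel-verified Lean document; each statement's English description precedes it below -/
import Mathlib

section
/- A Lie algebra L over a field F is zpd if and only if span K_L = M_L, where M_L is the kernel of the linear map L ⊗ L → L sending x ⊗ y to [x,y], and K_L = { x ⊗ y : x, y ∈ L, [x,y] = 0 }. -/
open TensorProduct

/-- The linear span of all brackets `⁅x, y⁆` in a Lie algebra `L` over `F`,
i.e. the derived subalgebra `[L, L]` viewed as a subspace. -/
def lieBracketSpan (F L : Type*) [Field F] [LieRing L] [LieAlgebra F L] : Submodule F L :=
  Submodule.span F {z : L | ∃ x y : L, ⁅x, y⁆ = z}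

/-- A Lie algebra `L` over a field `F` is zero product determined (zpd) if every bilinear
map `f : L × L → F` vanishing on commuting pairs factors through the bracket via a linear
map `Φ : [L, L] → F`. -/
def IsZPD (F L : Type*) [Field F] [LieRing L] [LieAlgebra F L] : Prop :=
  ∀ f : L →ₗ[F] L →ₗ[F] F, (∀ x y : L, ⁅x, y⁆ = 0 → f x y = 0) →
    ∃ Φ : lieBracketSpan F L →ₗ[F] F,
      ∀ x y : L, f x y = Φ ⟨⁅x, y⁆, Submodule.subset_span ⟨x, y, rfl⟩⟩

/-- The bracket of a Lie algebra as a bilinear map. -/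
def bracketBilin (F L : Type*) [Field F] [LieRing L] [LieAlgebra F L] :
    L →ₗ[F] L →ₗ[F] L :=
  LinearMap.mk₂ F (fun x y => ⁅x, y⁆) add_lie smul_lie lie_add lie_smul

/-- `L` is zpd iff `span K_L = M_L`, where `M_L` is the kernel of the linear
map `L ⊗ L → L`, `x ⊗ y ↦ ⁅x,y⁆`, and `K_L = {x ⊗ y | ⁅x,y⁆ = 0}`. -/
theorem isZPD_iff_span_ker (F L : Type*) [Field F] [LieRing L] [LieAlgebra F L] :
    IsZPD F L ↔
      Submodule.span F {t : L ⊗[F] L | ∃ x y : L, ⁅x, y⁆ = 0 ∧ t = x ⊗ₜ[F] y} =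
        LinearMap.ker (TensorProduct.lift (bracketBilin F L)) := by

  set β := TensorProduct.lift (bracketBilin F L) with hβdef
  have hβt : ∀ x y : L, β (x ⊗ₜ[F] y) = ⁅x, y⁆ := fun x y => rfl
  have hmem : ∀ z, β z ∈ lieBracketSpan F L := by
    intro z
    induction z using TensorProduct.induction_on with
    | zero => simp
    | tmul x y => exact Submodule.subset_span ⟨x, y, rfl⟩
    | add a b ha hb => rw [map_add]; exact add_mem ha hb
  have hrange : LinearMap.range β = lieBracketSpan F L := by
    refine le_antisymm ?_ ?_
    · rintro z ⟨t, rfl⟩; exact hmem t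
    · rw [lieBracketSpan, Submodule.span_le]
      rintro z ⟨x, y, rfl⟩
      exact ⟨x ⊗ₜ[F] y, rfl⟩
  have hKsub : Submodule.span F {t : L ⊗[F] L | ∃ x y : L, ⁅x, y⁆ = 0 ∧ t = x ⊗ₜ[F] y}
      ≤ LinearMap.ker β := by
    rw [Submodule.span_le]
    rintro t ⟨x, y, h, rfl⟩
    simp [LinearMap.mem_ker, hβt, h]
  constructor
  · intro hzpd
    refine le_antisymm hKsub ?_
    intro t ht
    set S := Submodule.span F {t : L ⊗[F] L | ∃ x y : L, ⁅x, y⁆ = 0 ∧ t = x ⊗ₜ[F] y} with hS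
    have key : ∀ φ : ((L ⊗[F] L) ⧸ S) →ₗ[F] F, φ (Submodule.Quotient.mk t) = 0 := by
      intro φ
      set g : L ⊗[F] L →ₗ[F] F := φ.comp S.mkQ with hg
      have hgK : ∀ x y : L, ⁅x, y⁆ = 0 → g (x ⊗ₜ[F] y) = 0 := by
        intro x y h
        have : (x ⊗ₜ[F] y : L ⊗[F] L) ∈ S := Submodule.subset_span ⟨x, y, h, rfl⟩
        show φ (Submodule.Quotient.mk (x ⊗ₜ[F] y)) = 0
        rw [(Submodule.Quotient.mk_eq_zero S).mpr this, map_zero]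
      obtain ⟨Φ, hΦ⟩ := hzpd (LinearMap.compr₂ (TensorProduct.mk F L L) g)
        (fun x y h => hgK x y h)
      have hfac : g = Φ.comp (β.codRestrict (lieBracketSpan F L) hmem) := by
        apply TensorProduct.ext'
        intro x y
        exact hΦ x y
      have ht0 : β.codRestrict (lieBracketSpan F L) hmem t = 0 := by
        apply Subtype.ext
        simpa using (LinearMap.mem_ker.mp ht)
      have : g t = 0 := by rw [hfac]; simp [ht0]
      simpa [hg, Submodule.mkQ_apply] using this
    have hzero : (Submodule.Quotient.mk t : (L ⊗[F] L) ⧸ S) = 0 :=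
      (Module.forall_dual_apply_eq_zero_iff F _).mp key
    rwa [Submodule.Quotient.mk_eq_zero] at hzero
  · intro hsp f hf
    set F' := TensorProduct.lift f with hF'
    have hker : LinearMap.ker β ≤ LinearMap.ker F' := by
      rw [← hsp, Submodule.span_le]
      rintro t ⟨x, y, h, rfl⟩
      simp [LinearMap.mem_ker, hF', hf x y h]
    let e := β.quotKerEquivRange
    let C : LinearMap.range β →ₗ[F] F :=
      ((LinearMap.ker β).liftQ F' hker) ∘ₗ e.symm.toLinearMap
    have hC : ∀ t : L ⊗[F] L, C ⟨β t, LinearMap.mem_range_self β t⟩ = F' t := by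
      intro t
      have h1 : e (Submodule.Quotient.mk t) = ⟨β t, LinearMap.mem_range_self β t⟩ :=
        Subtype.ext (LinearMap.quotKerEquivRange_apply_mk β t)
      have h2 : e.symm ⟨β t, LinearMap.mem_range_self β t⟩ = Submodule.Quotient.mk t := by
        rw [← h1, e.symm_apply_apply]
      simp [C, h2]
    refine ⟨C ∘ₗ (LinearEquiv.ofEq _ _ hrange.symm).toLinearMap, fun x y => ?_⟩
    have hcast : (LinearEquiv.ofEq _ _ hrange.symm)
        ⟨⁅x, y⁆, Submodule.subset_span ⟨x, y, rfl⟩⟩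
        = ⟨β (x ⊗ₜ[F] y), LinearMap.mem_range_self β _⟩ := Subtype.ext rfl
    calc f x y = F' (x ⊗ₜ[F] y) := rfl
      _ = C ⟨β (x ⊗ₜ[F] y), LinearMap.mem_range_self β _⟩ := (hC _).symm
      _ = _ := by rw [← hcast]; rfl
end

section
/- If L is a finite dimensional Lie algebra over a field F and the canonical linear map L ∧ L → [L,L] sending x ∧ y to [x,y] is injective (equivalently, dim L ∧ L = dim [L,L]), then L is zpd. -/
open TensorProduct

/-- The subspace of `L ⊗ L` spanned by the squares `x ⊗ x`; the quotient of `L ⊗ L` by it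
is the exterior square `L ∧ L`. -/
def sqSpan (F L : Type*) [Field F] [LieRing L] [LieAlgebra F L] : Submodule F (L ⊗[F] L) :=
  Submodule.span F {t : L ⊗[F] L | ∃ x : L, t = x ⊗ₜ[F] x}

theorem sqSpan_le_ker (F L : Type*) [Field F] [LieRing L] [LieAlgebra F L] :
    sqSpan F L ≤ LinearMap.ker (TensorProduct.lift (bracketBilin F L)) := by
  rw [sqSpan, Submodule.span_le]
  rintro t ⟨x, rfl⟩
  simp [LinearMap.mem_ker, bracketBilin]

/-- if `L` is finite dimensional and the canonical map `L ∧ L → [L, L]`,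
`x ∧ y ↦ ⁅x, y⁆`, is injective (here `L ∧ L` is realised as the quotient of `L ⊗ L` by the
span of the squares `x ⊗ x`), then `L` is zpd. -/
theorem isZPD_of_injective_wedge_map (F L : Type*) [Field F] [LieRing L] [LieAlgebra F L]
    [FiniteDimensional F L]
    (hinj : Function.Injective
      (Submodule.liftQ (sqSpan F L) (TensorProduct.lift (bracketBilin F L))
        (sqSpan_le_ker F L))) :
    IsZPD F L := by
  intro f hf
  set β := Submodule.liftQ (sqSpan F L) (TensorProduct.lift (bracketBilin F L))
    (sqSpan_le_ker F L) with hβ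
  have hker : sqSpan F L ≤ LinearMap.ker (TensorProduct.lift f) := by
    rw [sqSpan, Submodule.span_le]
    rintro t ⟨x, rfl⟩
    simp [LinearMap.mem_ker, hf x x (lie_self x)]
  set g := Submodule.liftQ (sqSpan F L) (TensorProduct.lift f) hker with hg
  have hβmk : ∀ x y : L, β (Submodule.Quotient.mk (x ⊗ₜ[F] y)) = ⁅x, y⁆ := by
    intro x y
    simp [hβ, bracketBilin]
  have hrange : LinearMap.range β = lieBracketSpan F L := by
    apply le_antisymm
    · rintro z ⟨q, rfl⟩
      obtain ⟨t, rfl⟩ := Submodule.Quotient.mk_surjective _ q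
      induction t using TensorProduct.induction_on with
      | zero => simp
      | tmul x y =>
        rw [hβmk x y]
        exact Submodule.subset_span ⟨x, y, rfl⟩
      | add a b ha hb =>
        rw [Submodule.Quotient.mk_add, map_add]
        exact add_mem ha hb
    · rw [lieBracketSpan, Submodule.span_le]
      rintro z ⟨x, y, rfl⟩
      exact ⟨Submodule.Quotient.mk (x ⊗ₜ[F] y), hβmk x y⟩
  let e : _ ≃ₗ[F] lieBracketSpan F L :=
    (LinearEquiv.ofInjective β hinj).trans (LinearEquiv.ofEq _ _ hrange)
  refine ⟨g ∘ₗ e.symm.toLinearMap, fun x y => ?_⟩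
  have h1 : (⟨⁅x, y⁆, Submodule.subset_span ⟨x, y, rfl⟩⟩ : lieBracketSpan F L)
      = e (Submodule.Quotient.mk (x ⊗ₜ[F] y)) := by
    apply Subtype.ext
    simp [e, LinearEquiv.ofInjective_apply, hβmk x y]
  rw [h1]
  simp [hg]
end

section
/- Let L be a zpd Lie algebra and I an ideal of L with [L,I] = [L,L] ∩ I. Then the quotient Lie algebra L/I is zpd. -/
/-- if `L` is zpd and `I` is an ideal of `L` with `[L, I] = [L, L] ⊓ I`, then
the quotient Lie algebra `L ⧸ I` is zpd. -/
theorem isZPD_quotient_of_lieIdeal_inf (F L : Type*) [Field F] [LieRing L] [LieAlgebra F L]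
    (hL : IsZPD F L) (I : LieIdeal F L)
    (hI : ⁅(⊤ : LieIdeal F L), I⁆ = ⁅(⊤ : LieIdeal F L), (⊤ : LieIdeal F L)⁆ ⊓ I) :
    IsZPD F (L ⧸ I) := by
  intro f hf
  set π : L →ₗ[F] L ⧸ I := (I : Submodule F L).mkQ with hπdef
  have hπbr : ∀ x y : L, π ⁅x, y⁆ = ⁅π x, π y⁆ := fun x y => rfl
  have hπI : ∀ z : L, z ∈ I → π z = 0 := by
    intro z hz
    exact (Submodule.Quotient.mk_eq_zero (I : Submodule F L)).mpr hz
  have hg0 : ∀ x y : L, ⁅x, y⁆ = 0 → (f.compl₁₂ π π) x y = 0 := by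
    intro x y h
    have h2 : ⁅π x, π y⁆ = 0 := by rw [← hπbr, h, map_zero]
    simpa using hf _ _ h2
  obtain ⟨Φ, hΦ⟩ := hL _ hg0
  -- Φ vanishes on `[L,L] ⊓ I`
  have hΦI : ∀ (z : L) (hz : z ∈ lieBracketSpan F L), z ∈ I → Φ ⟨z, hz⟩ = 0 := by
    intro z hz hzI
    have hzLL : z ∈ LieSubmodule.toSubmodule ⁅(⊤ : LieIdeal F L), (⊤ : LieIdeal F L)⁆ := by
      rw [LieSubmodule.lieIdeal_oper_eq_linear_span']
      refine Submodule.span_mono ?_ hz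
      rintro w ⟨x, y, rfl⟩
      exact ⟨x, trivial, y, trivial, rfl⟩
    have hz2 : z ∈ ⁅(⊤ : LieIdeal F L), I⁆ := by
      rw [hI]
      exact ⟨(LieSubmodule.mem_toSubmodule _).mp hzLL, hzI⟩
    have hz' : z ∈ Submodule.span F {m : L | ∃ x ∈ (⊤ : LieIdeal F L), ∃ n ∈ I, ⁅x, n⁆ = m} := by
      rw [← LieSubmodule.lieIdeal_oper_eq_linear_span']
      exact (LieSubmodule.mem_toSubmodule _).mpr hz2
    have hle : Submodule.span F {m : L | ∃ x ∈ (⊤ : LieIdeal F L), ∃ n ∈ I, ⁅x, n⁆ = m} ≤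
        lieBracketSpan F L := by
      refine Submodule.span_le.mpr ?_
      rintro w ⟨x, -, n, hn, rfl⟩
      exact Submodule.subset_span ⟨x, n, rfl⟩
    refine Submodule.span_induction
      (p := fun w hw => ∀ hw' : w ∈ lieBracketSpan F L, Φ ⟨w, hw'⟩ = 0)
      ?_ ?_ ?_ ?_ hz' hz
    · rintro w ⟨x, -, n, hn, rfl⟩ hw'
      have : Φ ⟨⁅x, n⁆, hw'⟩ = (f.compl₁₂ π π) x n := (hΦ x n).symm
      rw [this]
      simp [hπI n hn]
    · intro hw'
      have : (⟨0, hw'⟩ : lieBracketSpan F L) = 0 := rfl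
      rw [this, map_zero]
    · intro a b ha hb iha ihb hw'
      have ha' : a ∈ lieBracketSpan F L := hle ha
      have hb' : b ∈ lieBracketSpan F L := hle hb
      have : (⟨a + b, hw'⟩ : lieBracketSpan F L) = ⟨a, ha'⟩ + ⟨b, hb'⟩ := rfl
      rw [this, map_add, iha ha', ihb hb', add_zero]
    · intro c a ha iha hw'
      have ha' : a ∈ lieBracketSpan F L := hle ha
      have : (⟨c • a, hw'⟩ : lieBracketSpan F L) = c • ⟨a, ha'⟩ := rfl
      rw [this, map_smul, iha ha', smul_zero]
  -- the restriction of π to the bracket spans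
  have hmaps : ∀ z ∈ lieBracketSpan F L, π z ∈ lieBracketSpan F (L ⧸ I) := by
    intro z hz
    have : lieBracketSpan F L ≤ Submodule.comap π (lieBracketSpan F (L ⧸ I)) := by
      refine Submodule.span_le.mpr ?_
      rintro w ⟨x, y, rfl⟩
      exact Submodule.subset_span ⟨π x, π y, (hπbr x y).symm⟩
    exact this hz
  set q : lieBracketSpan F L →ₗ[F] lieBracketSpan F (L ⧸ I) := π.restrict hmaps with hqdef
  have hqval : ∀ s : lieBracketSpan F L, (q s : L ⧸ I) = π s := fun s => rfl
  have hπsurj : Function.Surjective π := Submodule.mkQ_surjective _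
  have hqsurj : Function.Surjective q := by
    rintro ⟨w, hw⟩
    have hw' : w ∈ Submodule.map π (lieBracketSpan F L) := by
      refine Submodule.span_le.mpr ?_ hw
      rintro v ⟨a, b, rfl⟩

      obtain ⟨x, rfl⟩ := hπsurj a
      obtain ⟨y, rfl⟩ := hπsurj b
      exact ⟨⁅x, y⁆, Submodule.subset_span ⟨x, y, rfl⟩, hπbr x y⟩
    obtain ⟨s, hs, hsw⟩ := hw'
    exact ⟨⟨s, hs⟩, Subtype.ext hsw⟩
  have hker : LinearMap.ker q ≤ LinearMap.ker Φ := by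
    rintro ⟨s, hs⟩ hsq
    have : π s = 0 := by
      have := congrArg (Subtype.val) hsq
      simpa [hqval] using this
    have hsI : s ∈ I := (Submodule.Quotient.mk_eq_zero (I : Submodule F L)).mp this
    exact hΦI s hs hsI
  -- descend Φ along q
  set e := LinearMap.quotKerEquivOfSurjective q hqsurj with hedef
  set Φbar : lieBracketSpan F (L ⧸ I) →ₗ[F] F :=
    ((LinearMap.ker q).liftQ Φ hker) ∘ₗ (e.symm : lieBracketSpan F (L ⧸ I) →ₗ[F] _) with hΦbardef
  have hΦbar : ∀ s : lieBracketSpan F L, Φbar (q s) = Φ s := by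
    intro s
    have he : e (Submodule.Quotient.mk s) = q s := rfl
    have : e.symm (q s) = Submodule.Quotient.mk s := by
      rw [← he, LinearEquiv.symm_apply_apply]
    simp only [hΦbardef, LinearMap.comp_apply, LinearEquiv.coe_coe, this]
    exact Submodule.liftQ_apply _ _ _
  refine ⟨Φbar, ?_⟩
  intro a b
  obtain ⟨x, rfl⟩ := hπsurj a
  obtain ⟨y, rfl⟩ := hπsurj b
  have h1 : f (π x) (π y) = Φ ⟨⁅x, y⁆, Submodule.subset_span ⟨x, y, rfl⟩⟩ := by
    simpa using hΦ x y
  rw [h1, ← hΦbar]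
  congr 1
end

section
/- Let L be a zpd Lie algebra and I an ideal of L such that L/I is centrally closed, i.e., every 2-cocycle on L/I with values in F is a coboundary. Then L/I is zpd. -/
/-- A Lie algebra `M` over `F` is centrally closed if every `2`-cocycle
`f : M × M → F` (a skew-symmetric bilinear map satisfying the cocycle identity) is a
coboundary, i.e. of the form `f(x,y) = Φ(⁅x,y⁆)` for a linear map `Φ : [M,M] → F`. -/
def IsCentrallyClosed (F M : Type*) [Field F] [LieRing M] [LieAlgebra F M] : Prop :=
  ∀ f : M →ₗ[F] M →ₗ[F] F,
    (∀ x y : M, f x y = - f y x) →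
    (∀ x y z : M, f ⁅x, y⁆ z + f ⁅z, x⁆ y + f ⁅y, z⁆ x = 0) →
    ∃ Φ : lieBracketSpan F M →ₗ[F] F,
      ∀ x y : M, f x y = Φ ⟨⁅x, y⁆, Submodule.subset_span ⟨x, y, rfl⟩⟩

/-! A bilinear form `f` on `L ⧸ I` vanishing on commuting pairs pulls back to such a form on `L`,
which is a coboundary `Ψ ∘ ⁅·, ·⁆` because `L` is zpd. Coboundaries are skew-symmetric
2-cocycles (by the Jacobi identity), and both properties descend along the surjection
`L → L ⧸ I`, so `f` is a 2-cocycle and hence a coboundary since `L ⧸ I` is centrally closed. -/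

section

variable {F L : Type*} [Field F] [LieRing L] [LieAlgebra F L]

theorem lie_lie_add_lie_lie_add_lie_lie (x y z : L) :
    ⁅⁅x, y⁆, z⁆ + ⁅⁅z, x⁆, y⁆ + ⁅⁅y, z⁆, x⁆ = 0 := by
  rw [← lie_skew ⁅x, y⁆ z, ← lie_skew ⁅z, x⁆ y, ← lie_skew ⁅y, z⁆ x]
  calc -⁅z, ⁅x, y⁆⁆ + -⁅y, ⁅z, x⁆⁆ + -⁅x, ⁅y, z⁆⁆
      = -(⁅x, ⁅y, z⁆⁆ + ⁅y, ⁅z, x⁆⁆ + ⁅z, ⁅x, y⁆⁆) := by abel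
    _ = 0 := by rw [lie_jacobi, neg_zero]

variable {f : L →ₗ[F] L →ₗ[F] F} {Φ : lieBracketSpan F L →ₗ[F] F}

theorem skew_of_eq_bracket (hf : ∀ x y : L, f x y = Φ ⟨⁅x, y⁆, Submodule.subset_span ⟨x, y, rfl⟩⟩)
    (x y : L) : f x y = -f y x := by
  rw [hf, hf, ← map_neg]
  congr 1
  ext
  exact (lie_skew x y).symm

theorem cocycle_of_eq_bracket
    (hf : ∀ x y : L, f x y = Φ ⟨⁅x, y⁆, Submodule.subset_span ⟨x, y, rfl⟩⟩) (x y z : L) :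
    f ⁅x, y⁆ z + f ⁅z, x⁆ y + f ⁅y, z⁆ x = 0 := by
  rw [hf, hf, hf, ← map_add, ← map_add, ← map_zero Φ]
  congr 1
  ext
  exact lie_lie_add_lie_lie_add_lie_lie x y z

end

section

variable {F L M : Type*} [Field F] [LieRing L] [LieAlgebra F L] [LieRing M] [LieAlgebra F M]
  {π : L →ₗ⁅F⁆ M} {f : M →ₗ[F] M →ₗ[F] F}

theorem skew_of_surjective (hπ : Function.Surjective π)
    (hf : ∀ x y : L, f (π x) (π y) = -f (π y) (π x)) (u v : M) :
    f u v = -f v u := by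
  obtain ⟨x, rfl⟩ := hπ u
  obtain ⟨y, rfl⟩ := hπ v
  exact hf x y

theorem cocycle_of_surjective (hπ : Function.Surjective π)
    (hf : ∀ x y z : L, f (π ⁅x, y⁆) (π z) + f (π ⁅z, x⁆) (π y) + f (π ⁅y, z⁆) (π x) = 0)
    (u v w : M) : f ⁅u, v⁆ w + f ⁅w, u⁆ v + f ⁅v, w⁆ u = 0 := by
  obtain ⟨x, rfl⟩ := hπ u
  obtain ⟨y, rfl⟩ := hπ v
  obtain ⟨z, rfl⟩ := hπ w
  simpa only [LieHom.map_lie] using hf x y z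

end

theorem IsZPD.of_surjective {F L M : Type*} [Field F] [LieRing L] [LieAlgebra F L] [LieRing M]
    [LieAlgebra F M] (hL : IsZPD F L) (hM : IsCentrallyClosed F M) {π : L →ₗ⁅F⁆ M}
    (hπ : Function.Surjective π) : IsZPD F M := by
  intro f hf
  let g : L →ₗ[F] L →ₗ[F] F := f.compl₁₂ π π
  have hg : ∀ x y : L, ⁅x, y⁆ = 0 → g x y = 0 := fun x y hxy =>
    hf (π x) (π y) (by rw [← LieHom.map_lie, hxy, map_zero])
  obtain ⟨Ψ, hΨ⟩ := hL g hg
  exact hM f (skew_of_surjective hπ (skew_of_eq_bracket hΨ))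
    (cocycle_of_surjective hπ (cocycle_of_eq_bracket hΨ))

def LieIdeal.quotientMk {F L : Type*} [Field F] [LieRing L] [LieAlgebra F L] (I : LieIdeal F L) :
    L →ₗ⁅F⁆ L ⧸ I :=
  { LieSubmodule.Quotient.mk' I with
    map_lie' := fun {x y} => LieSubmodule.Quotient.mk_bracket (I := I) x y }

theorem LieIdeal.surjective_quotientMk {F L : Type*} [Field F] [LieRing L] [LieAlgebra F L]
    (I : LieIdeal F L) : Function.Surjective I.quotientMk :=
  Quot.mk_surjective

/-- if `L` is zpd and `I` is an ideal of `L` such that the quotient `L ⧸ I` is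
centrally closed, then `L ⧸ I` is zpd. -/
theorem isZPD_quotient_of_centrallyClosed (F L : Type*) [Field F] [LieRing L]
    [LieAlgebra F L] (hL : IsZPD F L) (I : LieIdeal F L)
    (hcc : IsCentrallyClosed F (L ⧸ I)) :
    IsZPD F (L ⧸ I) :=
  hL.of_surjective hcc (LieIdeal.surjective_quotientMk I)
end

section
/- Let L be a zpd Lie algebra and A a commutative associative unital algebra over F. Then the Lie algebra L ⊗ A, with bracket [x ⊗ a, y ⊗ b] = [x,y] ⊗ ab, is zpd. -/
open TensorProduct

noncomputable instance (F L A : Type*) [Field F] [LieRing L] [LieAlgebra F L]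
    [CommRing A] [Algebra F A] : LieAlgebra F (A ⊗[F] L) where
  lie_smul t x y := by
    rw [← algebraMap_smul A t y, lie_smul, algebraMap_smul]

/-- Two linear functionals on the bracket span that agree on all brackets agree. -/
lemma span_ext_aux {F L : Type*} [Field F] [LieRing L] [LieAlgebra F L]
    (φ ψ : lieBracketSpan F L →ₗ[F] F)
    (h : ∀ x y : L, φ ⟨⁅x, y⁆, Submodule.subset_span ⟨x, y, rfl⟩⟩ =
      ψ ⟨⁅x, y⁆, Submodule.subset_span ⟨x, y, rfl⟩⟩) :
    φ = ψ := by
  ext ⟨z, hz⟩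
  induction hz using Submodule.span_induction with
  | mem w hw =>
    obtain ⟨x, y, rfl⟩ := hw
    exact h x y
  | zero =>
    show φ 0 = ψ 0
    simp
  | add x y hx hy ihx ihy =>
    show φ (⟨x, hx⟩ + ⟨y, hy⟩) = ψ (⟨x, hx⟩ + ⟨y, hy⟩)
    rw [map_add, map_add, ihx, ihy]
  | smul a x hx ih =>
    show φ (a • ⟨x, hx⟩) = ψ (a • ⟨x, hx⟩)
    rw [map_smul, map_smul, ih]

/-- if `L` is a zpd Lie algebra over `F` and `A` is a commutative associative
unital `F`-algebra, then the current Lie algebra `L ⊗ A` (realised in Mathlib as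
`A ⊗[F] L`, with bracket `⁅a ⊗ x, b ⊗ y⁆ = ab ⊗ ⁅x, y⁆`) is zpd. -/
theorem isZPD_tensor_commAlgebra (F L A : Type*) [Field F] [LieRing L] [LieAlgebra F L]
    [CommRing A] [Algebra F A] (hL : IsZPD F L) :
    IsZPD F (A ⊗[F] L) := by
  intro f hf
  classical
  have hb : ∀ (a b : A) (x y : L), ⁅a ⊗ₜ[F] x, b ⊗ₜ[F] y⁆ = (a * b) ⊗ₜ[F] ⁅x, y⁆ :=
    fun a b x y => LieAlgebra.ExtendScalars.bracket_tmul F A L L a b x y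
  -- f vanishes on pairs with the same L-component
  have hzz : ∀ (a b : A) (x : L), f (a ⊗ₜ x) (b ⊗ₜ x) = 0 := by
    intro a b x
    exact hf _ _ (by rw [hb]; simp)
  -- skew-symmetry in the L variables
  have hskew : ∀ (a b : A) (x y : L), f (a ⊗ₜ y) (b ⊗ₜ x) = - f (a ⊗ₜ x) (b ⊗ₜ y) := by
    intro a b x y
    have h0 : f (a ⊗ₜ (x + y)) (b ⊗ₜ (x + y)) = 0 := hzz a b (x + y)
    simp only [tmul_add, map_add, LinearMap.add_apply] at h0
    rw [hzz, hzz] at h0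
    linear_combination h0
  -- key identity: the value depends only on the product a*b
  have hkey : ∀ (a b : A) (x y : L),
      f (a ⊗ₜ x) (b ⊗ₜ y) = f ((1 : A) ⊗ₜ x) ((a * b) ⊗ₜ y) := by
    intro a b x y
    have h0 : f (a ⊗ₜ x + (1 : A) ⊗ₜ y) ((a * b) ⊗ₜ x + b ⊗ₜ y) = 0 := by
      apply hf
      rw [add_lie, lie_add, lie_add, hb, hb, hb, hb]
      rw [lie_self, lie_self, tmul_zero, tmul_zero, one_mul, ← lie_skew x y, tmul_neg]
      abel
    simp only [map_add, LinearMap.add_apply] at h0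
    rw [hzz, hzz] at h0
    have h1 := hskew (1 : A) (a * b) x y
    linear_combination h0 - h1
  -- for each c : A, factor the L-bilinear map (x, y) ↦ f (1 ⊗ x) (c ⊗ y)
  have hexists : ∀ c : A, ∃ Φ : lieBracketSpan F L →ₗ[F] F,
      ∀ x y : L, f ((1 : A) ⊗ₜ x) (c ⊗ₜ y) = Φ ⟨⁅x, y⁆, Submodule.subset_span ⟨x, y, rfl⟩⟩ := by
    intro c
    refine hL (LinearMap.mk₂ F (fun x y => f ((1 : A) ⊗ₜ x) (c ⊗ₜ y))
      (fun x x' y => by simp only [tmul_add, map_add, LinearMap.add_apply])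
      (fun t x y => by simp only [tmul_smul, map_smul, LinearMap.smul_apply])
      (fun x y y' => by simp only [tmul_add, map_add])
      (fun t x y => by simp only [tmul_smul, map_smul])) ?_
    intro x y hxy
    exact hf _ _ (by rw [hb, hxy, tmul_zero])
  choose g hg using hexists
  have gadd : ∀ c c' : A, g (c + c') = g c + g c' := by
    intro c c'
    apply span_ext_aux
    intro x y
    rw [LinearMap.add_apply, ← hg, ← hg, ← hg, add_tmul, map_add]
  have gsmul : ∀ (t : F) (c : A), g (t • c) = t • g c := by
    intro t c
    apply span_ext_aux
    intro x y
    rw [LinearMap.smul_apply, ← hg, ← hg, ← smul_tmul', map_smul]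
  obtain ⟨q, hq⟩ := Submodule.exists_isCompl (lieBracketSpan F L)
  set π := (lieBracketSpan F L).linearProjOfIsCompl q hq with hπdef
  let h : A →ₗ[F] L →ₗ[F] F := LinearMap.mk₂ F (fun c z => g c (π z))
    (fun c c' z => by simp only [gadd, LinearMap.add_apply])
    (fun t c z => by simp only [gsmul, LinearMap.smul_apply])
    (fun c z z' => by simp only [map_add])
    (fun t c z => by simp only [map_smul])
  set Θ : A ⊗[F] L →ₗ[F] F := TensorProduct.lift h with hΘdef
  have hΘ : ∀ (a b : A) (x y : L), Θ ⁅a ⊗ₜ[F] x, b ⊗ₜ[F] y⁆ = f (a ⊗ₜ x) (b ⊗ₜ y) := by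
    intro a b x y
    have hπb : π ⁅x, y⁆ = ⟨⁅x, y⁆, Submodule.subset_span ⟨x, y, rfl⟩⟩ :=
      Submodule.linearProjOfIsCompl_apply_left hq ⟨⁅x, y⁆, Submodule.subset_span ⟨x, y, rfl⟩⟩
    rw [hb, hΘdef, TensorProduct.lift.tmul]
    show g (a * b) (π ⁅x, y⁆) = _
    rw [hπb, ← hg]
    exact (hkey a b x y).symm
  have main : ∀ u v : A ⊗[F] L, f u v = Θ ⁅u, v⁆ := by
    intro u v
    induction u using TensorProduct.induction_on with
    | zero => simp
    | tmul a x =>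
      induction v using TensorProduct.induction_on with
      | zero => simp
      | tmul b y => exact (hΘ a b x y).symm
      | add v₁ v₂ ih₁ ih₂ => rw [lie_add, map_add, map_add, ih₁, ih₂]
    | add u₁ u₂ ih₁ ih₂ =>
      rw [add_lie, map_add, map_add, LinearMap.add_apply, ih₁, ih₂]
  refine ⟨Θ.comp (lieBracketSpan F (A ⊗[F] L)).subtype, fun u v => ?_⟩
  exact main u v
end

section
/- Let L be a zpd Lie algebra and V a zad L-module. Then the semidirect product Lie algebra L ⋉ V is zpd. -/
set_option linter.unusedSectionVars false

/-- The subspace `L·V` of a Lie module, spanned by all `⁅x, v⁆`. -/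
def lieActionSpan (F L V : Type*) [Field F] [LieRing L] [LieAlgebra F L]
    [AddCommGroup V] [Module F V] [LieRingModule L V] : Submodule F V :=
  Submodule.span F {z : V | ∃ (x : L) (v : V), ⁅x, v⁆ = z}

/-- A module `V` over a Lie algebra `L` is zero action determined (zad) if every bilinear
map `f : L × V → F` with `f(x,v) = 0` whenever `x·v = 0` factors through the action via a
linear map `Φ : L·V → F`. -/
def IsZAD (F L V : Type*) [Field F] [LieRing L] [LieAlgebra F L]
    [AddCommGroup V] [Module F V] [LieRingModule L V] [LieModule F L V] : Prop :=
  ∀ f : L →ₗ[F] V →ₗ[F] F, (∀ (x : L) (v : V), ⁅x, v⁆ = 0 → f x v = 0) →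
    ∃ Φ : lieActionSpan F L V →ₗ[F] F,
      ∀ (x : L) (v : V), f x v = Φ ⟨⁅x, v⁆, Submodule.subset_span ⟨x, v, rfl⟩⟩


/-- The semidirect product `L ⋉ V` of a Lie algebra and a Lie module, as a type. -/
def SemidirectProduct' (L V : Type*) := L × V

namespace SemidirectProduct'

variable (F L V : Type*) [Field F] [LieRing L] [LieAlgebra F L]
  [AddCommGroup V] [Module F V] [LieRingModule L V] [LieModule F L V]

instance : AddCommGroup (SemidirectProduct' L V) :=
  inferInstanceAs (AddCommGroup (L × V))

instance : Module F (SemidirectProduct' L V) := inferInstanceAs (Module F (L × V))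

/-- Build an element of `L ⋉ V`. -/
def mk (x : L) (v : V) : SemidirectProduct' L V := (x, v)

instance : LieRing (SemidirectProduct' L V) where
  bracket a b := mk L V ⁅a.1, b.1⁆ (⁅a.1, b.2⁆ - ⁅b.1, a.2⁆)
  add_lie a b c := by
    show mk L V ⁅a.1 + b.1, c.1⁆ (⁅a.1 + b.1, c.2⁆ - ⁅c.1, a.2 + b.2⁆) =
      mk L V (⁅a.1, c.1⁆ + ⁅b.1, c.1⁆)
        ((⁅a.1, c.2⁆ - ⁅c.1, a.2⁆) + (⁅b.1, c.2⁆ - ⁅c.1, b.2⁆))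
    exact congrArg₂ Prod.mk (by rw [add_lie]) (by rw [add_lie, lie_add]; abel)
  lie_add a b c := by
    show mk L V ⁅a.1, b.1 + c.1⁆ (⁅a.1, b.2 + c.2⁆ - ⁅b.1 + c.1, a.2⁆) =
      mk L V (⁅a.1, b.1⁆ + ⁅a.1, c.1⁆)
        ((⁅a.1, b.2⁆ - ⁅b.1, a.2⁆) + (⁅a.1, c.2⁆ - ⁅c.1, a.2⁆))
    exact congrArg₂ Prod.mk (by rw [lie_add]) (by rw [lie_add, add_lie]; abel)
  lie_self a := by
    show mk L V ⁅a.1, a.1⁆ (⁅a.1, a.2⁆ - ⁅a.1, a.2⁆) = (0 : L × V)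
    exact congrArg₂ Prod.mk (by simp) (by simp)
  leibniz_lie a b c := by
    show mk L V ⁅a.1, ⁅b.1, c.1⁆⁆ (⁅a.1, ⁅b.1, c.2⁆ - ⁅c.1, b.2⁆⁆ - ⁅⁅b.1, c.1⁆, a.2⁆) =
      mk L V (⁅⁅a.1, b.1⁆, c.1⁆ + ⁅b.1, ⁅a.1, c.1⁆⁆)
        ((⁅⁅a.1, b.1⁆, c.2⁆ - ⁅c.1, ⁅a.1, b.2⁆ - ⁅b.1, a.2⁆⁆) +
          (⁅b.1, ⁅a.1, c.2⁆ - ⁅c.1, a.2⁆⁆ - ⁅⁅a.1, c.1⁆, b.2⁆))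
    refine congrArg₂ Prod.mk ?_ ?_
    · rw [leibniz_lie]
    · simp only [lie_sub, sub_lie, lie_lie]
      abel

instance : LieAlgebra F (SemidirectProduct' L V) where
  lie_smul t a b := by
    show mk L V ⁅a.1, t • b.1⁆ (⁅a.1, t • b.2⁆ - ⁅t • b.1, a.2⁆) =
      mk L V (t • ⁅a.1, b.1⁆) (t • (⁅a.1, b.2⁆ - ⁅b.1, a.2⁆))
    exact congrArg₂ Prod.mk (by rw [lie_smul]) (by rw [lie_smul, smul_lie, smul_sub])

theorem bracket_def (a b : SemidirectProduct' L V) :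
    ⁅a, b⁆ = mk L V ⁅a.1, b.1⁆ (⁅a.1, b.2⁆ - ⁅b.1, a.2⁆) := rfl

end SemidirectProduct'


/-- if `L` is a zpd Lie algebra and `V` is a zad `L`-module, then the
semidirect product `L ⋉ V` is a zpd Lie algebra. -/
theorem isZPD_semidirect (F L V : Type*) [Field F] [LieRing L] [LieAlgebra F L]
    [AddCommGroup V] [Module F V] [LieRingModule L V] [LieModule F L V]
    (hL : IsZPD F L) (hV : IsZAD F L V) :
    IsZPD F (SemidirectProduct' L V) := by
  intro f hf
  classical
  let jL : L →ₗ[F] SemidirectProduct' L V :=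
    { toFun := fun x => SemidirectProduct'.mk L V x 0
      map_add' := fun x y => by
        show SemidirectProduct'.mk L V (x + y) 0 =
          SemidirectProduct'.mk L V x 0 + SemidirectProduct'.mk L V y 0
        exact congrArg₂ Prod.mk rfl (zero_add (0 : V)).symm
      map_smul' := fun c x => by
        show SemidirectProduct'.mk L V (c • x) 0 = c • SemidirectProduct'.mk L V x 0
        exact congrArg₂ Prod.mk rfl (smul_zero c).symm }
  let jV : V →ₗ[F] SemidirectProduct' L V :=
    { toFun := fun v => SemidirectProduct'.mk L V 0 v
      map_add' := fun u v => by
        show SemidirectProduct'.mk L V 0 (u + v) =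
          SemidirectProduct'.mk L V 0 u + SemidirectProduct'.mk L V 0 v
        exact congrArg₂ Prod.mk (zero_add (0 : L)).symm rfl
      map_smul' := fun c v => by
        show SemidirectProduct'.mk L V 0 (c • v) = c • SemidirectProduct'.mk L V 0 v
        exact congrArg₂ Prod.mk (smul_zero c).symm rfl }
  have hdecomp : ∀ a : SemidirectProduct' L V, a = jL a.1 + jV a.2 := fun a =>
    congrArg₂ Prod.mk (add_zero a.1).symm (zero_add a.2).symm
  have hbLL : ∀ x y : L, ⁅jL x, jL y⁆ = jL ⁅x, y⁆ := fun x y => by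
    show SemidirectProduct'.mk L V ⁅x, y⁆ (⁅x, (0 : V)⁆ - ⁅y, (0 : V)⁆) =
      SemidirectProduct'.mk L V ⁅x, y⁆ 0
    rw [lie_zero, lie_zero, sub_zero]
  have hbLV : ∀ (x : L) (v : V), ⁅jL x, jV v⁆ = jV ⁅x, v⁆ := fun x v => by
    show SemidirectProduct'.mk L V ⁅x, (0 : L)⁆ (⁅x, v⁆ - ⁅(0 : L), (0 : V)⁆) =
      SemidirectProduct'.mk L V 0 ⁅x, v⁆
    rw [lie_zero, zero_lie, sub_zero]
  have hbVL : ∀ (u : V) (y : L), ⁅jV u, jL y⁆ = -jV ⁅y, u⁆ := fun u y => by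
    show SemidirectProduct'.mk L V ⁅(0 : L), y⁆ (⁅(0 : L), (0 : V)⁆ - ⁅y, u⁆) =
      SemidirectProduct'.mk L V (-(0 : L)) (-⁅y, u⁆)
    rw [zero_lie, zero_lie, zero_sub, neg_zero]
  have hbVV : ∀ u v : V, ⁅jV u, jV v⁆ = 0 := fun u v => by
    show SemidirectProduct'.mk L V ⁅(0 : L), (0 : L)⁆ (⁅(0 : L), v⁆ - ⁅(0 : L), u⁆) =
      SemidirectProduct'.mk L V 0 0
    rw [lie_zero, zero_lie, zero_lie, sub_zero]
  let f₁ : L →ₗ[F] L →ₗ[F] F := (f ∘ₗ jL).compl₂ jL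
  let f₂ : L →ₗ[F] V →ₗ[F] F := (f ∘ₗ jL).compl₂ jV
  let f₃ : L →ₗ[F] V →ₗ[F] F := (f.flip ∘ₗ jL).compl₂ jV
  have hf₁ : ∀ x y : L, f₁ x y = f (jL x) (jL y) := fun _ _ => rfl
  have hf₂ : ∀ (x : L) (v : V), f₂ x v = f (jL x) (jV v) := fun _ _ => rfl
  have hf₃ : ∀ (y : L) (u : V), f₃ y u = f (jV u) (jL y) := fun _ _ => rfl
  have h₁ : ∀ x y : L, ⁅x, y⁆ = 0 → f₁ x y = 0 := fun x y h => by
    rw [hf₁]; exact hf _ _ (by rw [hbLL, h, map_zero])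
  have h₂ : ∀ (x : L) (v : V), ⁅x, v⁆ = 0 → f₂ x v = 0 := fun x v h => by
    rw [hf₂]; exact hf _ _ (by rw [hbLV, h, map_zero])
  have h₃ : ∀ (y : L) (u : V), ⁅y, u⁆ = 0 → f₃ y u = 0 := fun y u h => by
    rw [hf₃]; exact hf _ _ (by rw [hbVL, h, map_zero, neg_zero])
  obtain ⟨Φ₁, hΦ₁⟩ := hL f₁ h₁
  obtain ⟨Φ₂, hΦ₂⟩ := hV f₂ h₂
  obtain ⟨Φ₃, hΦ₃⟩ := hV f₃ h₃
  -- the diagonal identity : Φ₂ + Φ₃ vanishes on generators, hence everywhere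
  have hgen : ∀ (x : L) (v : V),
      Φ₂ ⟨⁅x, v⁆, Submodule.subset_span ⟨x, v, rfl⟩⟩ +
      Φ₃ ⟨⁅x, v⁆, Submodule.subset_span ⟨x, v, rfl⟩⟩ = 0 := by
    intro x v
    have hdg : f (jL x + jV v) (jL x + jV v) = 0 := hf _ _ (lie_self _)
    simp only [map_add, LinearMap.add_apply] at hdg
    rw [← hf₁ x x, ← hf₂ x v, ← hf₃ x v] at hdg
    have hvv : f (jV v) (jV v) = 0 := hf _ _ (hbVV v v)
    have hxx : f₁ x x = 0 := h₁ x x (lie_self x)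
    rw [hvv, hxx, hΦ₂ x v, hΦ₃ x v] at hdg
    linear_combination hdg
  have hdiag : ∀ w : lieActionSpan F L V, Φ₃ w = -Φ₂ w := by
    have key : ∀ z (hz : z ∈ lieActionSpan F L V),
        Φ₂ ⟨z, hz⟩ + Φ₃ ⟨z, hz⟩ = 0 := by
      intro z hz
      induction hz using Submodule.span_induction with
      | mem z hz =>
        obtain ⟨x, v, rfl⟩ := hz
        exact hgen x v
      | zero =>
        show Φ₂ 0 + Φ₃ 0 = 0
        rw [map_zero, map_zero, add_zero]
      | add a b ha hb iha ihb =>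
        have h : (⟨a + b, _⟩ : lieActionSpan F L V) = ⟨a, ha⟩ + ⟨b, hb⟩ := rfl
        rw [h, map_add, map_add]
        linear_combination iha + ihb
      | smul c a ha iha =>
        have h : (⟨c • a, _⟩ : lieActionSpan F L V) =
            c • (⟨a, ha⟩ : lieActionSpan F L V) := rfl
        rw [h, map_smul, map_smul, ← smul_add, iha, smul_zero]
    intro w
    have h := key w.1 w.2
    simp only [Subtype.coe_eta] at h
    linear_combination h
  obtain ⟨Φ₁', hΦ₁'⟩ := LinearMap.exists_extend Φ₁
  obtain ⟨Φ₂', hΦ₂'⟩ := LinearMap.exists_extend Φ₂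
  have hΦ₁'' : ∀ w : lieBracketSpan F L, Φ₁' w.1 = Φ₁ w := fun w =>
    LinearMap.congr_fun hΦ₁' w
  have hΦ₂'' : ∀ w : lieActionSpan F L V, Φ₂' w.1 = Φ₂ w := fun w =>
    LinearMap.congr_fun hΦ₂' w
  let G : SemidirectProduct' L V →ₗ[F] F :=
    { toFun := fun a => Φ₁' a.1 + Φ₂' a.2
      map_add' := fun a b => by
        show Φ₁' (a.1 + b.1) + Φ₂' (a.2 + b.2) = _
        rw [map_add, map_add]; ring
      map_smul' := fun c a => by
        show Φ₁' (c • a.1) + Φ₂' (c • a.2) = _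
        rw [map_smul, map_smul]
        show c • Φ₁' a.1 + c • Φ₂' a.2 = c • (Φ₁' a.1 + Φ₂' a.2)
        rw [smul_add] }
  refine ⟨G ∘ₗ (lieBracketSpan F (SemidirectProduct' L V)).subtype, fun a b => ?_⟩
  have expand : f a b = f₁ a.1 b.1 + f₂ a.1 b.2 + f₃ b.1 a.2 + f (jV a.2) (jV b.2) := by
    conv_lhs => rw [hdecomp a, hdecomp b]
    simp only [map_add, LinearMap.add_apply]
    rw [← hf₁, ← hf₂, ← hf₃]
    ring
  have hvv : f (jV a.2) (jV b.2) = 0 := hf _ _ (hbVV _ _)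
  rw [expand, hvv, hΦ₁, hΦ₂, hΦ₃, hdiag]
  show _ = Φ₁' (⁅a, b⁆ : SemidirectProduct' L V).1 + Φ₂' (⁅a, b⁆ : SemidirectProduct' L V).2
  rw [SemidirectProduct'.bracket_def]
  show _ = Φ₁' ⁅a.1, b.1⁆ + Φ₂' (⁅a.1, b.2⁆ - ⁅b.1, a.2⁆)
  rw [map_sub]
  rw [(hΦ₁'' ⟨⁅a.1, b.1⁆, Submodule.subset_span ⟨a.1, b.1, rfl⟩⟩).symm,
    (hΦ₂'' ⟨⁅a.1, b.2⁆, Submodule.subset_span ⟨a.1, b.2, rfl⟩⟩).symm,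
    (hΦ₂'' ⟨⁅b.1, a.2⁆, Submodule.subset_span ⟨b.1, a.2, rfl⟩⟩).symm]
  ring
end

section
/- Let L be a Lie algebra in which any two commuting elements are linearly dependent, and let V be an L-module. Then the semidirect product L ⋉ V is zpd if and only if L is zpd and V is zad. -/
set_option linter.unusedSectionVars false

/-!
A linear form on the span of the brackets extends to the whole space, so zpd (resp. zad) says
that every bilinear form vanishing on commuting (resp. annihilating) pairs is `ψ ∘ ⁅·, ·⁆` for a
linear form `ψ` on all of `L` (resp. `V`). A form on `L ⋉ V` vanishing on commuting pairs is
alternating and vanishes on `V × V`, hence is determined by its restrictions to `L × L` and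
`L × V`, to which zpd of `L` and zad of `V` apply. Conversely, a form `g` on `L × L` (resp.
`L × V`) vanishing on commuting (resp. annihilating) pairs gives the form
`(x + u, y + v) ↦ g x y` (resp. `g x v - g y u`) on `L ⋉ V`, which vanishes on commuting pairs.
For the second one this is where commuting elements being proportional enters: if `y = c • x`
and `x · v = y · u`, then `x · (v - c • u) = 0`, so `g x v = c • g x u = g y u`.
-/

theorem exists_linearMap_on_span_iff {K P Q α β : Type*} [DivisionRing K] [AddCommGroup P]
    [Module K P] [AddCommGroup Q] [Module K Q] {s : Set P} (g : α → β → P)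
    (hg : ∀ a b, g a b ∈ Submodule.span K s) (c : α → β → Q) :
    (∃ Φ : Submodule.span K s →ₗ[K] Q, ∀ a b, c a b = Φ ⟨g a b, hg a b⟩) ↔
      ∃ ψ : P →ₗ[K] Q, ∀ a b, c a b = ψ (g a b) := by
  constructor
  · rintro ⟨Φ, hΦ⟩
    obtain ⟨ψ, rfl⟩ := Φ.exists_extend
    exact ⟨ψ, hΦ⟩
  · rintro ⟨ψ, hψ⟩
    exact ⟨ψ ∘ₗ Submodule.subtype _, hψ⟩

section LieAlgebra

variable {F L : Type*} [Field F] [LieRing L] [LieAlgebra F L]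

theorem isZPD_iff_exists_linear :
    IsZPD F L ↔ ∀ f : L →ₗ[F] L →ₗ[F] F, (∀ x y : L, ⁅x, y⁆ = 0 → f x y = 0) →
      ∃ ψ : L →ₗ[F] F, ∀ x y : L, f x y = ψ ⁅x, y⁆ :=
  forall_congr' fun f => imp_congr_right fun _ =>
    exists_linearMap_on_span_iff (fun x y => ⁅x, y⁆) _ fun x y => f x y

theorem isZAD_iff_exists_linear {V : Type*} [AddCommGroup V] [Module F V] [LieRingModule L V]
    [LieModule F L V] :
    IsZAD F L V ↔ ∀ f : L →ₗ[F] V →ₗ[F] F, (∀ (x : L) (v : V), ⁅x, v⁆ = 0 → f x v = 0) →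
      ∃ ψ : V →ₗ[F] F, ∀ (x : L) (v : V), f x v = ψ ⁅x, v⁆ :=
  forall_congr' fun f => imp_congr_right fun _ =>
    exists_linearMap_on_span_iff (fun x v => ⁅x, v⁆) _ fun x v => f x v

theorem isAlt_of_forall_lie_eq_zero {M : Type*} [AddCommGroup M] [Module F M]
    {f : L →ₗ[F] L →ₗ[F] M} (hf : ∀ x y : L, ⁅x, y⁆ = 0 → f x y = 0) : f.IsAlt :=
  fun x => hf x x (lie_self x)

end LieAlgebra

theorem apply_eq_apply_of_lie_eq {F L V M : Type*} [Field F] [LieRing L] [LieAlgebra F L]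
    [AddCommGroup V] [Module F V] [LieRingModule L V] [LieModule F L V]
    [AddCommGroup M] [Module F M] {f : L →ₗ[F] V →ₗ[F] M}
    (hf : ∀ (x : L) (v : V), ⁅x, v⁆ = 0 → f x v = 0) {x y : L} {u v : V}
    (hdep : ¬ LinearIndependent F ![x, y]) (h : ⁅x, v⁆ = ⁅y, u⁆) : f x v = f y u := by
  by_cases hx : x = 0
  · subst hx
    rw [zero_lie] at h
    rw [map_zero, LinearMap.zero_apply, hf y u h.symm]
  · obtain ⟨c, rfl⟩ : ∃ c : F, c • x = y := by simpa [LinearIndependent.pair_iff' hx] using hdep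
    have hvu : f x (v - c • u) = 0 := hf x _ (by rw [lie_sub, lie_smul, h, smul_lie, sub_self])
    rw [map_sub, map_smul, sub_eq_zero] at hvu
    rw [hvu, map_smul, LinearMap.smul_apply]

namespace SemidirectProduct'

variable (F L V : Type*) [Field F] [LieRing L] [LieAlgebra F L]
  [AddCommGroup V] [Module F V] [LieRingModule L V] [LieModule F L V]

def inl : L →ₗ[F] SemidirectProduct' L V := LinearMap.inl F L V

def inr : V →ₗ[F] SemidirectProduct' L V := LinearMap.inr F L V

def fst : SemidirectProduct' L V →ₗ[F] L := LinearMap.fst F L V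

def snd : SemidirectProduct' L V →ₗ[F] V := LinearMap.snd F L V

variable {F L V}

@[simp]
theorem fst_inl (x : L) : fst F L V (inl F L V x) = x := rfl

@[simp]
theorem snd_inl (x : L) : snd F L V (inl F L V x) = 0 := rfl

@[simp]
theorem fst_inr (v : V) : fst F L V (inr F L V v) = 0 := rfl

@[simp]
theorem snd_inr (v : V) : snd F L V (inr F L V v) = v := rfl

variable (F) in
theorem inl_fst_add_inr_snd (a : SemidirectProduct' L V) :
    inl F L V (fst F L V a) + inr F L V (snd F L V a) = a :=
  Prod.ext (add_zero a.1) (zero_add a.2)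

variable (F) in
theorem lie_eq_zero_iff (a b : SemidirectProduct' L V) :
    ⁅a, b⁆ = 0 ↔ ⁅fst F L V a, fst F L V b⁆ = 0 ∧
      ⁅fst F L V a, snd F L V b⁆ = ⁅fst F L V b, snd F L V a⁆ := by
  rw [bracket_def, ← sub_eq_zero (a := ⁅_, snd F L V b⁆)]
  exact Prod.ext_iff

theorem fst_lie (a b : SemidirectProduct' L V) :
    fst F L V ⁅a, b⁆ = ⁅fst F L V a, fst F L V b⁆ := rfl

theorem snd_lie (a b : SemidirectProduct' L V) :
    snd F L V ⁅a, b⁆ = ⁅fst F L V a, snd F L V b⁆ - ⁅fst F L V b, snd F L V a⁆ := rfl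

@[simp]
theorem lie_inl_inl (x y : L) : ⁅inl F L V x, inl F L V y⁆ = inl F L V ⁅x, y⁆ :=
  Prod.ext rfl (show ⁅x, (0 : V)⁆ - ⁅y, (0 : V)⁆ = 0 by simp)

@[simp]
theorem lie_inl_inr (x : L) (v : V) : ⁅inl F L V x, inr F L V v⁆ = inr F L V ⁅x, v⁆ :=
  Prod.ext (lie_zero x) (show ⁅x, v⁆ - ⁅(0 : L), (0 : V)⁆ = ⁅x, v⁆ by simp)

@[simp]
theorem lie_inr_inr (u v : V) : ⁅inr F L V u, inr F L V v⁆ = 0 :=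
  Prod.ext (lie_zero _) (show ⁅(0 : L), v⁆ - ⁅(0 : L), u⁆ = 0 by simp)

end SemidirectProduct'

open SemidirectProduct'

section Semidirect

variable {F L V : Type*} [Field F] [LieRing L] [LieAlgebra F L]
  [AddCommGroup V] [Module F V] [LieRingModule L V] [LieModule F L V]

theorem isZPD_of_isZPD_semidirect (h : IsZPD F (SemidirectProduct' L V)) : IsZPD F L := by
  rw [isZPD_iff_exists_linear] at h ⊢
  intro f hf
  obtain ⟨ψ, hψ⟩ := h (f.compl₁₂ (fst F L V) (fst F L V)) fun a b hab =>
    hf _ _ ((lie_eq_zero_iff F a b).1 hab).1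
  exact ⟨ψ ∘ₗ inl F L V, fun x y => by simpa using hψ (inl F L V x) (inl F L V y)⟩

theorem isZAD_of_isZPD_semidirect
    (hdep : ∀ x y : L, ⁅x, y⁆ = 0 → ¬ LinearIndependent F ![x, y])
    (h : IsZPD F (SemidirectProduct' L V)) : IsZAD F L V := by
  rw [isZPD_iff_exists_linear] at h
  rw [isZAD_iff_exists_linear]
  intro f hf
  set g := f.compl₁₂ (fst F L V) (snd F L V)
  obtain ⟨ψ, hψ⟩ := h (g - g.flip) fun a b hab => by
    obtain ⟨h₁, h₂⟩ := (lie_eq_zero_iff F a b).1 hab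
    simp [g, apply_eq_apply_of_lie_eq hf (hdep _ _ h₁) h₂]
  exact ⟨ψ ∘ₗ inr F L V, fun x v => by simpa [g] using hψ (inl F L V x) (inr F L V v)⟩

theorem apply_eq_of_forall_lie_eq_zero {M : Type*} [AddCommGroup M] [Module F M]
    {f : SemidirectProduct' L V →ₗ[F] SemidirectProduct' L V →ₗ[F] M}
    (hf : ∀ a b, ⁅a, b⁆ = 0 → f a b = 0) (a b : SemidirectProduct' L V) :
    f a b = f (inl F L V (fst F L V a)) (inl F L V (fst F L V b)) +
      f (inl F L V (fst F L V a)) (inr F L V (snd F L V b)) -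
      f (inl F L V (fst F L V b)) (inr F L V (snd F L V a)) := by
  conv_lhs => rw [← inl_fst_add_inr_snd F a, ← inl_fst_add_inr_snd F b]
  simp only [map_add, LinearMap.add_apply]
  rw [hf _ _ (lie_inr_inr _ _),
    ← (isAlt_of_forall_lie_eq_zero hf).neg (inl F L V (fst F L V b)) (inr F L V (snd F L V a))]
  abel

theorem isZPD_semidirect_of_isZPD_of_isZAD (hL : IsZPD F L) (hV : IsZAD F L V) :
    IsZPD F (SemidirectProduct' L V) := by
  rw [isZPD_iff_exists_linear] at hL ⊢
  rw [isZAD_iff_exists_linear] at hV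
  intro f hf
  obtain ⟨ψ₁, hψ₁⟩ := hL (f.compl₁₂ (inl F L V) (inl F L V)) fun x y hxy =>
    hf _ _ (by simp [hxy])
  obtain ⟨ψ₂, hψ₂⟩ := hV (f.compl₁₂ (inl F L V) (inr F L V)) fun x v hxv =>
    hf _ _ (by simp [hxv])
  simp only [LinearMap.compl₁₂_apply] at hψ₁ hψ₂
  refine ⟨ψ₁ ∘ₗ fst F L V + ψ₂ ∘ₗ snd F L V, fun a b => ?_⟩
  rw [apply_eq_of_forall_lie_eq_zero hf a b, hψ₁, hψ₂, hψ₂]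
  simp [fst_lie, snd_lie, add_sub_assoc]

end Semidirect

/-- if any two commuting elements of `L` are linearly dependent, then for any
`L`-module `V` the semidirect product `L ⋉ V` is zpd iff `L` is zpd and `V` is zad. -/
theorem isZPD_semidirect_iff (F L V : Type*) [Field F] [LieRing L] [LieAlgebra F L]
    [AddCommGroup V] [Module F V] [LieRingModule L V] [LieModule F L V]
    (hdep : ∀ x y : L, ⁅x, y⁆ = 0 → ¬ LinearIndependent F ![x, y]) :
    IsZPD F (SemidirectProduct' L V) ↔ IsZPD F L ∧ IsZAD F L V :=
  ⟨fun h => ⟨isZPD_of_isZPD_semidirect h, isZAD_of_isZPD_semidirect hdep h⟩,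
    fun ⟨hL, hV⟩ => isZPD_semidirect_of_isZPD_of_isZAD hL hV⟩
end

section
/- Every Lie algebra of dimension at most 3 over an arbitrary field is zpd. -/
open Matrix LinearMap

theorem Module.exists_linearCombination_surjective_of_rank_le {K V : Type*} [Field K]
    [AddCommGroup V] [Module K V] {n : ℕ} (h : Module.rank K V ≤ n) :
    ∃ e : Fin n → V, Function.Surjective (Fintype.linearCombination K e) := by
  have : Module.Finite K V :=
    Module.rank_lt_aleph0_iff.1 (h.trans_lt Cardinal.natCast_lt_aleph0)
  have hle : Module.finrank K V ≤ n := Module.finrank_le_of_rank_le h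
  let b := Module.finBasis K V
  refine ⟨fun i => if hi : (i : ℕ) < Module.finrank K V then b ⟨i, hi⟩ else 0, ?_⟩
  rw [← range_eq_top, Fintype.range_linearCombination, eq_top_iff, ← b.span_eq]
  refine Submodule.span_mono ?_
  rintro _ ⟨j, rfl⟩
  exact ⟨Fin.castLE hle j, by simp⟩

theorem exists_cross_eq {K : Type*} [Field K] (t : Fin 3 → K) :
    ∃ a b : Fin 3 → K, a ⨯₃ b = t := by
  by_cases ht : t 0 = 0
  · refine ⟨![1, 0, 0], ![0, t 2, -t 1], ?_⟩
    ext i; fin_cases i <;> simp [cross_apply, ht]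
  · refine ⟨![-t 1, t 0, 0], ![-t 2 / t 0, 0, 1], ?_⟩
    ext i; fin_cases i <;> simp [cross_apply]; field_simp

theorem LinearMap.IsAlt.apply_linearCombination_eq_cross {R L M : Type*} [CommRing R]
    [AddCommGroup L] [Module R L] [AddCommGroup M] [Module R M] {B : L →ₗ[R] L →ₗ[R] M}
    (hB : B.IsAlt) (e : Fin 3 → L) (a b : Fin 3 → R) :
    B (Fintype.linearCombination R e a) (Fintype.linearCombination R e b) =
      Fintype.linearCombination R (fun i => B (e (i + 1)) (e (i + 2))) (a ⨯₃ b) := by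
  simp only [Fintype.linearCombination_apply, Fin.sum_univ_three, map_add, map_smul,
    LinearMap.add_apply, LinearMap.smul_apply, hB.self_eq_zero,
    ← hB.neg (e 0) (e 1), ← hB.neg (e 1) (e 2), ← hB.neg (e 2) (e 0), cross_apply,
    Fin.reduceAdd, cons_val_zero, cons_val_one, cons_val, smul_zero]
  module

theorem LinearMap.exists_comp_eq_of_ker_le {K V W N : Type*} [Field K] [AddCommGroup V]
    [Module K V] [AddCommGroup W] [Module K W] [AddCommGroup N] [Module K N]
    (g : V →ₗ[K] W) (k : V →ₗ[K] N) (hker : ker g ≤ ker k) :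
    ∃ Ψ : W →ₗ[K] N, Ψ ∘ₗ g = k := by
  obtain ⟨σ, hσ⟩ := ((ker g).liftQ g le_rfl).exists_leftInverse_of_injective
    (Submodule.ker_liftQ_eq_bot' _ _ rfl)
  refine ⟨(ker g).liftQ k hker ∘ₗ σ, LinearMap.ext fun v => ?_⟩
  have hσv : σ (g v) = Submodule.Quotient.mk v := congr($hσ (Submodule.Quotient.mk v))
  simp [hσv]

theorem LinearMap.IsAlt.exists_eq_comp_of_rank_le_three {K L M N : Type*} [Field K]
    [AddCommGroup L] [Module K L] [AddCommGroup M] [Module K M] [AddCommGroup N] [Module K N]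
    (hL : Module.rank K L ≤ 3) {B : L →ₗ[K] L →ₗ[K] M} (hB : B.IsAlt)
    (f : L →ₗ[K] L →ₗ[K] N) (hf : ∀ x y, B x y = 0 → f x y = 0) :
    ∃ Ψ : M →ₗ[K] N, ∀ x y, f x y = Ψ (B x y) := by
  obtain ⟨e, he⟩ := Module.exists_linearCombination_surjective_of_rank_le hL
  have hf' : f.IsAlt := fun z => hf z z (hB z)
  let g := Fintype.linearCombination K fun i => B (e (i + 1)) (e (i + 2))
  let k := Fintype.linearCombination K fun i => f (e (i + 1)) (e (i + 2))
  have hker : ker g ≤ ker k := by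
    intro t ht
    obtain ⟨a, b, rfl⟩ := exists_cross_eq t
    rw [mem_ker, ← hf'.apply_linearCombination_eq_cross]
    exact hf _ _ (by rwa [hB.apply_linearCombination_eq_cross])
  obtain ⟨Ψ, hΨ⟩ := g.exists_comp_eq_of_ker_le k hker
  refine ⟨Ψ, fun x y => ?_⟩
  obtain ⟨a, rfl⟩ := he x
  obtain ⟨b, rfl⟩ := he y
  rw [hB.apply_linearCombination_eq_cross, hf'.apply_linearCombination_eq_cross]
  exact (LinearMap.congr_fun hΨ _).symm

/-- every Lie algebra of dimension at most `3` over an arbitrary field is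
zpd. -/
theorem isZPD_of_rank_le_three (F L : Type*) [Field F] [LieRing L] [LieAlgebra F L]
    (h : Module.rank F L ≤ 3) :
    IsZPD F L := by
  intro f hf
  obtain ⟨Ψ, hΨ⟩ := LinearMap.IsAlt.exists_eq_comp_of_rank_le_three h
    (B := (LieModule.toEnd F L L : L →ₗ[F] Module.End F L)) lie_self f hf
  exact ⟨Ψ ∘ₗ (lieBracketSpan F L).subtype, hΨ⟩
end

section
/- Let L be a zpd Lie algebra in which any two commuting elements are linearly dependent. Then every subspace of L of dimension at least 3 is a Lie subalgebra of L. -/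
/-- If a pair is linearly dependent, then either the first vector is zero or the
second is a multiple of the first. -/
lemma dep_cases {F L : Type*} [Field F] [AddCommGroup L] [Module F L] {u v : L}
    (h : ¬ LinearIndependent F ![u, v]) : u = 0 ∨ ∃ c : F, v = c • u := by
  rw [LinearIndependent.pair_iff] at h
  push_neg at h
  obtain ⟨s, t, hst, hne⟩ := h
  by_cases ht : t = 0
  · subst ht
    have hs : s ≠ 0 := fun hs => (hne hs) rfl
    left
    have : s • u = 0 := by simpa using hst
    simpa [hs] using (smul_eq_zero.mp this)
  · right
    refine ⟨t⁻¹ * -s, ?_⟩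
    have ht' : t • v = (-s) • u := by
      rw [neg_smul, eq_neg_iff_add_eq_zero, add_comm]
      exact hst
    calc v = t⁻¹ • (t • v) := by rw [smul_smul, inv_mul_cancel₀ ht, one_smul]
    _ = t⁻¹ • ((-s) • u) := by rw [ht']
    _ = (t⁻¹ * -s) • u := (smul_smul _ _ _)

/-- The skew-symmetric bilinear form `(u, v) ↦ φ u * ψ v - ψ u * φ v`. -/
def skewForm {F L : Type*} [Field F] [AddCommGroup L] [Module F L]
    (φ ψ : Module.Dual F L) : L →ₗ[F] L →ₗ[F] F :=
  LinearMap.mk₂ F (fun u v => φ u * ψ v - ψ u * φ v)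
    (fun m₁ m₂ n => by simp [map_add]; ring)
    (fun c m n => by simp [map_smul, smul_eq_mul]; ring)
    (fun m n₁ n₂ => by simp [map_add]; ring)
    (fun c m n => by simp [map_smul, smul_eq_mul]; ring)

@[simp] lemma skewForm_apply {F L : Type*} [Field F] [AddCommGroup L] [Module F L]
    (φ ψ : Module.Dual F L) (u v : L) :
    skewForm φ ψ u v = φ u * ψ v - ψ u * φ v := rfl

/-- if `L` is zpd and any two commuting elements of `L` are linearly
dependent, then every subspace of `L` of dimension at least `3` is a Lie subalgebra,
i.e. closed under the bracket. -/
theorem subspace_of_rank_ge_three_is_subalgebra (F L : Type*) [Field F] [LieRing L]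
    [LieAlgebra F L] (hL : IsZPD F L)
    (hdep : ∀ x y : L, ⁅x, y⁆ = 0 → ¬ LinearIndependent F ![x, y])
    (W : Submodule F L) (hW : 3 ≤ Module.rank F W) :
    ∀ x ∈ W, ∀ y ∈ W, ⁅x, y⁆ ∈ W := by
  intro x hx y hy
  by_cases hxy : LinearIndependent F ![x, y]
  swap
  · rcases dep_cases hxy with h0 | ⟨c, rfl⟩
    · simp [h0, W.zero_mem]
    · simp [W.zero_mem]
  -- find z ∈ W with x, y, z linearly independent
  have hzW : ∃ z ∈ W, z ∉ Submodule.span F {x, y} := by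
    by_contra h
    push_neg at h
    have hle : W ≤ Submodule.span F {x, y} := fun z hz => h z hz
    have h2 : Module.rank F W ≤ 2 := by
      refine (Submodule.rank_mono hle).trans ((rank_span_le _).trans ?_)
      have : ({x, y} : Set L) = insert x {y} := rfl
      calc Cardinal.mk ({x, y} : Set L) ≤ Cardinal.mk ({y} : Set L) + 1 :=
            Cardinal.mk_insert_le
      _ ≤ 1 + 1 := by simp
      _ = 2 := one_add_one_eq_two
    have : (3 : Cardinal) ≤ 2 := hW.trans h2
    norm_num at this
  obtain ⟨z, hzw, hznot⟩ := hzW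
  have hind : LinearIndependent F ![x, y, z] := by
    have hsnoc : ![x, y, z] = Fin.snoc ![x, y] z := by
      funext i
      fin_cases i <;> simp [Fin.snoc] <;> rfl
    rw [hsnoc, linearIndependent_fin_snoc]
    refine ⟨hxy, ?_⟩
    convert hznot using 2
    simp [Matrix.range_cons, Matrix.range_empty, Set.pair_comm]
  -- reduce to showing every functional vanishing on W kills ⁅x, y⁆
  rw [← Submodule.Quotient.mk_eq_zero W,
    ← Module.forall_dual_apply_eq_zero_iff F (Submodule.Quotient.mk ⁅x, y⁆)]
  intro g
  set φ : Module.Dual F L := g.comp W.mkQ with hφdef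
  have hφW : ∀ w ∈ W, φ w = 0 := by
    intro w hw
    simp [hφdef, (Submodule.Quotient.mk_eq_zero W).mpr hw]
  have hgoal : φ ⁅x, y⁆ = 0 → g (Submodule.Quotient.mk ⁅x, y⁆) = 0 := by
    intro h; simpa [hφdef] using h
  apply hgoal
  -- the key linear relation, obtained from zpd for every ψ
  have key : ∀ ψ : Module.Dual F L,
      ψ (φ ⁅y, z⁆ • x - φ ⁅x, z⁆ • y + φ ⁅x, y⁆ • z) = 0 := by
    intro ψ
    obtain ⟨Φ, hΦ⟩ := hL (skewForm φ ψ) (by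
      intro u v huv
      rcases dep_cases (hdep u v huv) with h0 | ⟨c, rfl⟩
      · simp [h0]
      · simp only [skewForm_apply, map_smul, smul_eq_mul]; ring)
    have mem1 : ⁅⁅x, y⁆, z⁆ ∈ lieBracketSpan F L :=
      Submodule.subset_span ⟨⁅x, y⁆, z, rfl⟩
    have mem2 : ⁅x, ⁅y, z⁆⁆ ∈ lieBracketSpan F L :=
      Submodule.subset_span ⟨x, ⁅y, z⁆, rfl⟩
    have mem3 : ⁅y, ⁅x, z⁆⁆ ∈ lieBracketSpan F L :=
      Submodule.subset_span ⟨y, ⁅x, z⁆, rfl⟩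
    have esub : (⟨⁅⁅x, y⁆, z⁆, mem1⟩ : lieBracketSpan F L)
        = ⟨⁅x, ⁅y, z⁆⁆, mem2⟩ - ⟨⁅y, ⁅x, z⁆⁆, mem3⟩ := by
      apply Subtype.ext
      simp [lie_lie]
    have h1 := hΦ ⁅x, y⁆ z
    rw [esub, map_sub, ← hΦ x ⁅y, z⁆, ← hΦ y ⁅x, z⁆] at h1
    have hx0 : φ x = 0 := hφW x hx
    have hy0 : φ y = 0 := hφW y hy
    have hz0 : φ z = 0 := hφW z hzw
    simp only [skewForm_apply] at h1
    rw [hx0, hy0, hz0] at h1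
    simp only [map_add, map_sub, map_smul, smul_eq_mul]
    linear_combination h1
  have hrel : φ ⁅y, z⁆ • x - φ ⁅x, z⁆ • y + φ ⁅x, y⁆ • z = 0 :=
    (Module.forall_dual_apply_eq_zero_iff F _).mp key
  have := Fintype.linearIndependent_iff.mp hind ![φ ⁅y, z⁆, -φ ⁅x, z⁆, φ ⁅x, y⁆]
    (by simpa [Fin.sum_univ_three, sub_eq_add_neg, neg_smul] using hrel) 2
  simpa using this
end

section
/- Let L be a zpd Lie algebra such that any two commuting elements of L are linearly dependent. Then dim L ≤ 3; moreover L is either a 3-dimensional simple Lie algebra, the 2-dimensional nonabelian Lie algebra, or the 1-dimensional Lie algebra. -/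
open Module Submodule

def CommutingDependent (F L : Type*) [Field F] [LieRing L] [LieAlgebra F L] : Prop :=
  ∀ x y : L, ⁅x, y⁆ = 0 → ¬ LinearIndependent F ![x, y]

section

variable {F L : Type*} [Field F] [LieRing L] [LieAlgebra F L]

theorem LinearIndependent.exists_dual_ne_zero {ι : Type*} {e : ι → L}
    (he : LinearIndependent F e) (i : ι) :
    ∃ φ : Dual F L, φ (e i) ≠ 0 ∧ ∀ j ≠ i, φ (e j) = 0 := by
  obtain ⟨φ, hφi, hker⟩ := exists_le_ker_of_notMem
    (he.notMem_span_image (s := {i}ᶜ) (Set.notMem_compl_iff.mpr rfl))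
  exact ⟨φ, hφi, fun j hj => hker (subset_span ⟨j, hj, rfl⟩)⟩

noncomputable def wedgeForm (φ ψ : Dual F L) : L →ₗ[F] L →ₗ[F] F :=
  (LinearMap.mul F F).compl₁₂ φ ψ - (LinearMap.mul F F).compl₁₂ ψ φ

@[simp]
theorem wedgeForm_apply (φ ψ : Dual F L) (x y : L) :
    wedgeForm φ ψ x y = φ x * ψ y - ψ x * φ y := rfl

theorem wedgeForm_eq_zero_of_not_linearIndependent {x y : L}
    (h : ¬ LinearIndependent F ![x, y]) (φ ψ : Dual F L) : wedgeForm φ ψ x y = 0 := by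
  rw [LinearIndependent.pair_iff] at h
  push Not at h
  obtain ⟨s, t, hst, hne⟩ := h
  have hφ : s * φ x + t * φ y = 0 := by simpa using congr(φ $hst)
  have hψ : s * ψ x + t * ψ y = 0 := by simpa using congr(ψ $hst)
  rw [wedgeForm_apply]
  by_cases hs : s = 0
  · exact (mul_eq_zero.mp (by linear_combination -ψ x * hφ + φ x * hψ :
      t * (φ x * ψ y - ψ x * φ y) = 0)).resolve_left (hne hs)
  · exact (mul_eq_zero.mp (by linear_combination ψ y * hφ - φ y * hψ :
      s * (φ x * ψ y - ψ x * φ y) = 0)).resolve_left hs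

theorem IsZPD.sum_apply_eq_zero (hL : IsZPD F L) {f : L →ₗ[F] L →ₗ[F] F}
    (hf : ∀ x y : L, ⁅x, y⁆ = 0 → f x y = 0) {ι : Type*} (s : Finset ι) (u v : ι → L)
    (h : ∑ i ∈ s, ⁅u i, v i⁆ = 0) : ∑ i ∈ s, f (u i) (v i) = 0 := by
  obtain ⟨Φ, hΦ⟩ := hL f hf
  have hsum : ∑ i ∈ s, (⟨⁅u i, v i⁆, subset_span ⟨u i, v i, rfl⟩⟩ : lieBracketSpan F L) = 0 :=
    Subtype.ext (by simpa using h)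
  simp_rw [hΦ, ← map_sum, hsum, map_zero]

theorem IsZPD.sum_wedgeForm_eq_zero (hL : IsZPD F L) (hdep : CommutingDependent F L)
    (φ ψ : Dual F L) {ι : Type*} (s : Finset ι) (u v : ι → L)
    (h : ∑ i ∈ s, ⁅u i, v i⁆ = 0) : ∑ i ∈ s, wedgeForm φ ψ (u i) (v i) = 0 :=
  hL.sum_apply_eq_zero
    (fun x y hxy => wedgeForm_eq_zero_of_not_linearIndependent (hdep x y hxy) φ ψ) s u v h

theorem lie_mem_span_of_notMem_span_pair (hL : IsZPD F L) (hdep : CommutingDependent F L)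
    {x y z : L} (hz : z ∉ span F {x, y}) : ⁅x, y⁆ ∈ span F {x, y, z} := by
  by_contra hxy
  obtain ⟨φ, hφz, hφ⟩ := exists_le_ker_of_notMem hz
  obtain ⟨ψ, hψxy, hψ⟩ := exists_le_ker_of_notMem hxy
  have hφx : φ x = 0 := hφ (subset_span (by simp))
  have hφy : φ y = 0 := hφ (subset_span (by simp))
  have hψx : ψ x = 0 := hψ (subset_span (by simp))
  have hψy : ψ y = 0 := hψ (subset_span (by simp))
  have hψz : ψ z = 0 := hψ (subset_span (by simp))
  have hjacobi := hL.sum_wedgeForm_eq_zero hdep φ ψ Finset.univ ![x, y, z]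
    ![⁅y, z⁆, ⁅z, x⁆, ⁅x, y⁆] (by simpa [Fin.sum_univ_three] using lie_jacobi x y z)
  simp [Fin.sum_univ_three, hφx, hφy, hψx, hψy, hψz, hφz, hψxy] at hjacobi

theorem linearIndependent_lie_of_linearIndependent (hL : IsZPD F L)
    (hdep : CommutingDependent F L) {ι : Type*} [LinearOrder ι] {e : ι → L}
    (he : LinearIndependent F e) :
    LinearIndependent F fun p : {p : ι × ι // p.1 < p.2} => ⁅e p.1.1, e p.1.2⁆ := by
  rw [linearIndependent_iff']
  intro s g hg q hq
  obtain ⟨⟨i, j⟩, hij⟩ := q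
  obtain ⟨φ, hφi, hφ⟩ := he.exists_dual_ne_zero i
  obtain ⟨ψ, hψj, hψ⟩ := he.exists_dual_ne_zero j
  have hoff : ∀ p : {p : ι × ι // p.1 < p.2}, p ≠ ⟨(i, j), hij⟩ →
      wedgeForm φ ψ (e p.1.1) (e p.1.2) = 0 := by
    rintro ⟨⟨a, b⟩, hab⟩ hne
    rw [wedgeForm_apply]
    by_cases hai : a = i
    · subst hai
      have hbj : b ≠ j := by rintro rfl; exact hne rfl
      rw [hψ b hbj, hψ a hij.ne, mul_zero, zero_mul, sub_zero]
    · rw [hφ a hai, zero_mul, zero_sub, neg_eq_zero]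
      by_cases haj : a = j
      · have hbi : b ≠ i := by rintro rfl; exact lt_asymm hij (haj ▸ hab)
        rw [hφ b hbi, mul_zero]
      · rw [hψ a haj, zero_mul]
  have hsum := hL.sum_wedgeForm_eq_zero hdep φ ψ s (fun p => g p • e p.1.1) (fun p => e p.1.2)
    (by simpa only [smul_lie] using hg)
  simp only [map_smul, LinearMap.smul_apply, smul_eq_mul] at hsum
  rw [Finset.sum_eq_single_of_mem _ hq fun p _ hp => by rw [hoff p hp, mul_zero]] at hsum
  simpa [hψ i hij.ne, hφi, hψj] using hsum

theorem lie_mem_span_range (hL : IsZPD F L) (hdep : CommutingDependent F L) {ι : Type*}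
    {e : ι → L} (he : LinearIndependent F e) {i j k : ι} (hki : k ≠ i) (hkj : k ≠ j) :
    ⁅e i, e j⁆ ∈ span F (Set.range e) := by
  have hk : e k ∉ span F {e i, e j} := by
    simpa [Set.image_pair] using he.notMem_span_image (s := {i, j}) (by simp [hki, hkj])
  refine span_mono ?_ (lie_mem_span_of_notMem_span_pair hL hdep hk)
  rintro _ (rfl | rfl | rfl) <;> exact Set.mem_range_self _

theorem not_linearIndependent_fin_four (hL : IsZPD F L) (hdep : CommutingDependent F L)
    (e : Fin 4 → L) : ¬ LinearIndependent F e := by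
  intro he
  classical
  have hle := linearIndependent_le_span' _ (linearIndependent_lie_of_linearIndependent hL hdep he)
    (Finset.univ.image e : Set L) <| by
      rintro _ ⟨⟨⟨i, j⟩, _⟩, rfl⟩
      obtain ⟨k, hki, hkj⟩ : ∃ k : Fin 4, k ≠ i ∧ k ≠ j := by revert i j; decide
      simpa using lie_mem_span_range hL hdep he hki hkj
  have hcard : (Finset.univ.image e).card ≤ 4 := Finset.card_image_le
  have hpairs : Fintype.card {p : Fin 4 × Fin 4 // p.1 < p.2} = 6 := by decide
  simp only [Cardinal.mk_fintype, Finset.coe_sort_coe, Fintype.card_coe, hpairs] at hle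
  norm_cast at hle
  omega

theorem rank_le_three (hL : IsZPD F L) (hdep : CommutingDependent F L) :
    Module.rank F L ≤ 3 := by
  refine rank_le fun s hs => ?_
  by_contra! h
  obtain ⟨f⟩ := Function.Embedding.nonempty_of_card_le (α := Fin 4) (β := s)
    (by simp only [Fintype.card_fin, Fintype.card_coe]; omega)
  exact not_linearIndependent_fin_four hL hdep _ (hs.comp f f.injective)

theorem mem_span_singleton_of_lie_eq_zero (hdep : CommutingDependent F L) {x w : L}
    (hx : x ≠ 0) (h : ⁅x, w⁆ = 0) : w ∈ F ∙ x := by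
  have hw := hdep x w h
  rw [LinearIndependent.pair_iff' hx] at hw
  push Not at hw
  obtain ⟨a, rfl⟩ := hw
  exact smul_mem _ a (mem_span_singleton_self x)

theorem finrank_le_two_of_lie_mem_span_singleton [FiniteDimensional F L]
    (hdep : CommutingDependent F L) {x : L} (hx : x ≠ 0) (h : ∀ w : L, ⁅w, x⁆ ∈ F ∙ x) :
    finrank F L ≤ 2 := by
  have hrange : LinearMap.range (LieAlgebra.ad F L x) ≤ F ∙ x := by
    rintro _ ⟨w, rfl⟩
    rw [LieAlgebra.ad_apply, ← lie_skew]
    exact neg_mem (h w)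
  have hker : LinearMap.ker (LieAlgebra.ad F L x) ≤ F ∙ x :=
    fun w hw => mem_span_singleton_of_lie_eq_zero hdep hx hw
  rw [← LinearMap.finrank_range_add_finrank_ker (LieAlgebra.ad F L x)]
  have := finrank_mono hrange
  have := finrank_mono hker
  rw [finrank_span_singleton hx] at *
  omega

theorem lie_mem_span_singleton_of_mem_span_pair {x y p q : L} (hp : p ∈ span F {x, y})
    (hq : q ∈ span F {x, y}) : ⁅p, q⁆ ∈ F ∙ ⁅x, y⁆ := by
  obtain ⟨a, b, rfl⟩ := mem_span_pair.mp hp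
  obtain ⟨c, d, rfl⟩ := mem_span_pair.mp hq
  refine mem_span_singleton.mpr ⟨a * d - b * c, ?_⟩
  simp only [add_lie, lie_add, smul_lie, lie_smul, lie_self, ← lie_skew y x]
  module

theorem lie_lie_mem_span_singleton_of_lie_mem_span_pair {x y : L}
    (hx : ∀ w : L, ⁅w, x⁆ ∈ span F {x, y}) (hy : ∀ w : L, ⁅w, y⁆ ∈ span F {x, y}) (w : L) :
    ⁅w, ⁅x, y⁆⁆ ∈ F ∙ ⁅x, y⁆ := by
  have hx' : x ∈ span F {x, y} := subset_span (by simp)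
  have hy' : y ∈ span F {x, y} := subset_span (by simp)
  rw [leibniz_lie]
  exact add_mem (lie_mem_span_singleton_of_mem_span_pair (hx w) hy')
    (lie_mem_span_singleton_of_mem_span_pair hx' (hy w))

theorem exists_lie_ne_zero (hdep : CommutingDependent F L) (h : 1 < finrank F L) :
    ∃ x y : L, ⁅x, y⁆ ≠ 0 := by
  have : Nontrivial L := nontrivial_of_finrank_pos (zero_lt_one.trans h)
  obtain ⟨x, hx⟩ := exists_ne (0 : L)
  obtain ⟨y, hxy⟩ := exists_linearIndependent_pair_of_one_lt_finrank h hx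
  exact ⟨x, y, fun h0 => hdep x y h0 hxy⟩

theorem isSimple_of_finrank_eq_three (hdep : CommutingDependent F L) (h3 : finrank F L = 3) :
    LieAlgebra.IsSimple F L := by
  have : FiniteDimensional F L := Module.finite_of_finrank_eq_succ h3
  refine ⟨fun I => or_iff_not_imp_left.mpr fun hbot => ?_, fun habel => ?_⟩
  · obtain ⟨x, hxI, hx⟩ := (Submodule.ne_bot_iff I.toSubmodule).mp
      (mt (LieSubmodule.toSubmodule_eq_bot I).mp hbot)
    by_cases hsub : I.toSubmodule ≤ F ∙ x
    · have := finrank_le_two_of_lie_mem_span_singleton hdep hx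
        fun w => hsub (lie_mem_right F L I w x hxI)
      omega
    obtain ⟨y, hyI, hy⟩ := SetLike.not_le_iff_exists.mp hsub
    have hxy : LinearIndependent F ![x, y] :=
      (LinearIndependent.pair_iff' hx).mpr
        fun a ha => hy (ha ▸ smul_mem _ a (mem_span_singleton_self x))
    by_contra htop
    have hI : span F {x, y} = I.toSubmodule := by
      refine eq_of_le_of_finrank_le (span_le.mpr ?_) ?_
      · rintro _ (rfl | rfl) <;> assumption
      · have := finrank_lt (mt (LieSubmodule.toSubmodule_eq_top I).mp htop)
        have := finrank_span_eq_card hxy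
        rw [Matrix.range_cons_cons_empty, Fintype.card_fin] at this
        omega
    have := finrank_le_two_of_lie_mem_span_singleton hdep (fun h0 => hdep x y h0 hxy)
      (lie_lie_mem_span_singleton_of_lie_mem_span_pair
        (fun w => hI ▸ lie_mem_right F L I w x hxI) (fun w => hI ▸ lie_mem_right F L I w y hyI))
    omega
  · obtain ⟨x, y, hxy⟩ := exists_lie_ne_zero hdep (by omega)
    exact hxy (habel.trivial x y)

end

/-- if `L` is a (nonzero) zpd Lie algebra in which any two commuting elements
are linearly dependent, then `dim L ≤ 3`, and moreover `L` is a `3`-dimensional simple Lie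
algebra, or the `2`-dimensional nonabelian Lie algebra, or the `1`-dimensional Lie
algebra. -/
theorem isZPD_dep_classification (F L : Type*) [Field F] [LieRing L] [LieAlgebra F L]
    [Nontrivial L] (hL : IsZPD F L)
    (hdep : ∀ x y : L, ⁅x, y⁆ = 0 → ¬ LinearIndependent F ![x, y]) :
    Module.rank F L ≤ 3 ∧
      ((Module.rank F L = 3 ∧ LieAlgebra.IsSimple F L) ∨
        (Module.rank F L = 2 ∧ ∃ x y : L, ⁅x, y⁆ ≠ 0) ∨
        Module.rank F L = 1) := by
  have h3 := rank_le_three hL hdep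
  have : FiniteDimensional F L :=
    Module.rank_lt_aleph0_iff.mp (h3.trans_lt Cardinal.natCast_lt_aleph0)
  rw [← Module.finrank_eq_rank] at h3 ⊢
  norm_cast at h3 ⊢
  have h1 : 0 < finrank F L := Module.finrank_pos
  refine ⟨h3, ?_⟩
  interval_cases hn : finrank F L
  · exact Or.inr (Or.inr rfl)
  · exact Or.inr (Or.inl ⟨rfl, exists_lie_ne_zero hdep (by omega)⟩)
  · exact Or.inl ⟨rfl, isSimple_of_finrank_eq_three hdep hn⟩
end

section
/- Every Heisenberg Lie algebra is zpd: the Lie algebra h with basis {c} ∪ {x_i, x_{-i} : i ∈ I} (I a nonempty index set) and brackets [x_i, x_{-i}] = c for all i ∈ I, all other brackets of basis elements zero, is zpd over any field. -/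
section ZeroOnCommuting

variable {R L M : Type*} [CommRing R] [LieRing L] [LieAlgebra R L] [AddCommGroup M] [Module R M]
  {f : L →ₗ[R] L →ₗ[R] M}

theorem isAlt_of_lie_eq_zero_imp (hf : ∀ x y : L, ⁅x, y⁆ = 0 → f x y = 0) : f.IsAlt :=
  fun x => hf x x (lie_self x)

/-- `x + x'` and `y - y'` commute, and `f (x + x') (y - y') = 0` expands to `f x y = f x' y'`. -/
theorem apply_eq_apply_of_lie_eq_s15 (hf : ∀ x y : L, ⁅x, y⁆ = 0 → f x y = 0) {x y x' y' : L}
    (h : ⁅x, y⁆ = ⁅x', y'⁆) (hxy' : ⁅x, y'⁆ = 0) (hx'y : ⁅x', y⁆ = 0) : f x y = f x' y' := by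
  have hsum : ⁅x + x', y - y'⁆ = 0 := by
    rw [add_lie, lie_sub, lie_sub, h, hxy', hx'y]; abel
  have := hf _ _ hsum
  simp only [map_add, map_sub, LinearMap.add_apply, hf _ _ hxy', hf _ _ hx'y] at this
  exact sub_eq_zero.1 (by simpa using this)

end ZeroOnCommuting

theorem IsZPD.of_forall_exists_comp_lie (F L : Type*) [Field F] [LieRing L] [LieAlgebra F L]
    (h : ∀ f : L →ₗ[F] L →ₗ[F] F, (∀ x y : L, ⁅x, y⁆ = 0 → f x y = 0) →
      ∃ φ : L →ₗ[F] F, ∀ x y : L, f x y = φ ⁅x, y⁆) :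
    IsZPD F L := by
  intro f hf
  obtain ⟨φ, hφ⟩ := h f hf
  exact ⟨φ.comp (lieBracketSpan F L).subtype, hφ⟩

namespace Heisenberg

variable {R I L M : Type*} [CommRing R] [LieRing L] [LieAlgebra R L] [AddCommGroup M] [Module R M]
  (b : Module.Basis (Unit ⊕ I ⊕ I) R L)

theorem lie_basis_eq_zero_or
    (hcz : ∀ s : Unit ⊕ I ⊕ I, ⁅b (Sum.inl ()), b s⁆ = 0)
    (hxx : ∀ i j : I, ⁅b (Sum.inr (Sum.inl i)), b (Sum.inr (Sum.inl j))⁆ = 0)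
    (hyy : ∀ i j : I, ⁅b (Sum.inr (Sum.inr i)), b (Sum.inr (Sum.inr j))⁆ = 0)
    (hxy : ∀ i j : I, i ≠ j → ⁅b (Sum.inr (Sum.inl i)), b (Sum.inr (Sum.inr j))⁆ = 0)
    (s t : Unit ⊕ I ⊕ I) :
    ⁅b s, b t⁆ = 0 ∨ ∃ i : I, (s = Sum.inr (Sum.inl i) ∧ t = Sum.inr (Sum.inr i)) ∨
      (s = Sum.inr (Sum.inr i) ∧ t = Sum.inr (Sum.inl i)) := by
  have hzc : ∀ s, ⁅b s, b (Sum.inl ())⁆ = 0 := fun s => by rw [← lie_skew, hcz, neg_zero]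
  rcases s with ⟨⟩ | i | i
  · exact .inl (hcz t)
  · rcases t with ⟨⟩ | j | j
    · exact .inl (hzc _)
    · exact .inl (hxx i j)
    · rcases eq_or_ne i j with rfl | hij
      · exact .inr ⟨i, .inl ⟨rfl, rfl⟩⟩
      · exact .inl (hxy i j hij)
  · rcases t with ⟨⟩ | j | j
    · exact .inl (hzc _)
    · rcases eq_or_ne i j with rfl | hij
      · exact .inr ⟨i, .inr ⟨rfl, rfl⟩⟩
      · exact .inl (by rw [← lie_skew, hxy j i hij.symm, neg_zero])
    · exact .inl (hyy i j)

theorem bilin_eq_zero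
    (hcz : ∀ s : Unit ⊕ I ⊕ I, ⁅b (Sum.inl ()), b s⁆ = 0)
    (hxx : ∀ i j : I, ⁅b (Sum.inr (Sum.inl i)), b (Sum.inr (Sum.inl j))⁆ = 0)
    (hyy : ∀ i j : I, ⁅b (Sum.inr (Sum.inr i)), b (Sum.inr (Sum.inr j))⁆ = 0)
    (hxy : ∀ i j : I, i ≠ j → ⁅b (Sum.inr (Sum.inl i)), b (Sum.inr (Sum.inr j))⁆ = 0)
    {g : L →ₗ[R] L →ₗ[R] M} (hg : ∀ x y : L, ⁅x, y⁆ = 0 → g x y = 0)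
    (hgxy : ∀ i : I, g (b (Sum.inr (Sum.inl i))) (b (Sum.inr (Sum.inr i))) = 0) :
    g = 0 := by
  refine b.ext fun s => b.ext fun t => ?_
  rcases lie_basis_eq_zero_or b hcz hxx hyy hxy s t with h | ⟨i, ⟨rfl, rfl⟩ | ⟨rfl, rfl⟩⟩
  · exact hg _ _ h
  · exact hgxy i
  · rw [LinearMap.zero_apply, LinearMap.zero_apply, ← (isAlt_of_lie_eq_zero_imp hg).neg,
      hgxy i, neg_zero]

end Heisenberg

/-- every Heisenberg Lie algebra is zpd.  Here the Heisenberg algebra over a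
field `F` with nonempty index set `I` is any Lie algebra `L` with a basis
`{c} ∪ {xᵢ, x₋ᵢ : i ∈ I}` (indexed by `Unit ⊕ I ⊕ I`) satisfying `⁅xᵢ, x₋ᵢ⁆ = c` and all
other brackets of basis elements zero. -/
theorem heisenberg_isZPD (F I L : Type*) [Field F] [Nonempty I]
    [LieRing L] [LieAlgebra F L]
    (b : Module.Basis (Unit ⊕ I ⊕ I) F L)
    (hc : ∀ i : I, ⁅b (Sum.inr (Sum.inl i)), b (Sum.inr (Sum.inr i))⁆ = b (Sum.inl ()))
    (hcz : ∀ s : Unit ⊕ I ⊕ I, ⁅b (Sum.inl ()), b s⁆ = 0)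
    (hxx : ∀ i j : I, ⁅b (Sum.inr (Sum.inl i)), b (Sum.inr (Sum.inl j))⁆ = 0)
    (hyy : ∀ i j : I, ⁅b (Sum.inr (Sum.inr i)), b (Sum.inr (Sum.inr j))⁆ = 0)
    (hxy : ∀ i j : I, i ≠ j → ⁅b (Sum.inr (Sum.inl i)), b (Sum.inr (Sum.inr j))⁆ = 0) :
    IsZPD F L := by
  refine IsZPD.of_forall_exists_comp_lie F L fun f hf => ?_
  obtain ⟨i₀⟩ := ‹Nonempty I›
  set x : I → L := fun i => b (Sum.inr (Sum.inl i))
  set y : I → L := fun i => b (Sum.inr (Sum.inr i))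
  let φ : L →ₗ[F] F := f (x i₀) (y i₀) • b.coord (Sum.inl ())
  let g := f - (LieModule.toEnd F L L : L →ₗ[F] Module.End F L).compr₂ φ
  have hg : ∀ u v : L, ⁅u, v⁆ = 0 → g u v = 0 := fun u v h => by simp [g, h, hf u v h]
  have hgxy : ∀ i : I, g (x i) (y i) = 0 := fun i => by
    have hgi : g (x i) (y i) = g (x i₀) (y i₀) := by
      rcases eq_or_ne i i₀ with rfl | hi
      · rfl
      · exact apply_eq_apply_of_lie_eq_s15 hg ((hc i).trans (hc i₀).symm) (hxy i i₀ hi)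
          (hxy i₀ i hi.symm)
    rw [hgi]
    simp [g, φ, x, y, hc]
  have hg0 := Heisenberg.bilin_eq_zero b hcz hxx hyy hxy hg hgxy
  exact ⟨φ, fun u v => by simpa [g, sub_eq_zero] using LinearMap.congr_fun₂ hg0 u v⟩
end

section
/- Let b = ℂE ⊕ ℂH be the Borel subalgebra of sl_2(ℂ) and V(m) the (m+1)-dimensional simple sl_2-module restricted to b. Then V(m) is a zad b-module if and only if m = 2. Consequently the 4-dimensional aging algebra age(1) = b ⋉ V(2) (with Hu = u, Hv = −v, Ev = u, Eu = 0) is not zpd. -/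
/-!
For `m ≥ 1` the form `f (x, w) = ε(x) · wₘ`, pairing the `E`-coordinate of `x` with the
coefficient of the lowest weight vector `vₘ`, vanishes on all pairs with `x · w = 0`: the
coordinate functionals `vₘ*` and `vₘ₋₁*` transform under `E` and `H` by a triangular rule,
so `(aE + bH) · w = 0` forces `b wₘ = 0` and `a m wₘ = 0` when `b = 0`. Since
`(2 - m) E · vₘ = m H · vₘ₋₁` while `f` takes the values `2 - m` and `0` on these pairs, a zad
module has `m = 2`. Conversely, for `m = 2` the zero-action pairs `(E, v₀)`, `(H, v₁)` and
`(E + H, v₁ - v₀)` are exactly the relations needed to define `Φ` on the basis of `V = b · V`.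
The aging algebra is `b ⋉ V(1)`; the antisymmetrisation `f (x, q) - f (y, p)` of the `m = 1`
form vanishes on commuting pairs `(x, p), (y, q)` but separates `⁅E, v₁⁆ = ⁅H, v₀⁆`.
-/

set_option linter.unusedSectionVars false

theorem SemidirectProduct'.lie_mk {L V : Type*} [LieRing L] [AddCommGroup V] [LieRingModule L V]
    (x y : L) (v w : V) :
    ⁅SemidirectProduct'.mk L V x v, SemidirectProduct'.mk L V y w⁆ =
      SemidirectProduct'.mk L V ⁅x, y⁆ (⁅x, w⁆ - ⁅y, v⁆) :=
  rfl

theorem IsZPD.apply_eq_apply_of_lie_eq {F L : Type*} [Field F] [LieRing L] [LieAlgebra F L]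
    (hL : IsZPD F L) {f : L →ₗ[F] L →ₗ[F] F} (hf : ∀ x y : L, ⁅x, y⁆ = 0 → f x y = 0)
    {x y x' y' : L} (h : ⁅x, y⁆ = ⁅x', y'⁆) : f x y = f x' y' := by
  obtain ⟨Φ, hΦ⟩ := hL f hf
  rw [hΦ, hΦ]
  exact congrArg Φ (Subtype.ext h)

section

variable {F L V : Type*} [Field F] [LieRing L] [LieAlgebra F L]
  [AddCommGroup V] [Module F V] [LieRingModule L V] [LieModule F L V]

theorem IsZAD.apply_eq_apply_of_lie_eq (hV : IsZAD F L V)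
    {f : L →ₗ[F] V →ₗ[F] F} (hf : ∀ (x : L) (v : V), ⁅x, v⁆ = 0 → f x v = 0)
    {x y : L} {v w : V} (h : ⁅x, v⁆ = ⁅y, w⁆) : f x v = f y w := by
  obtain ⟨Φ, hΦ⟩ := hV f hf
  rw [hΦ, hΦ]
  exact congrArg Φ (Subtype.ext h)

theorem Module.Basis.lie_eq_coord_smul_add (bL : Module.Basis (Fin 2) F L) (x : L) (w : V) :
    ⁅x, w⁆ = bL.coord 0 x • ⁅bL 0, w⁆ + bL.coord 1 x • ⁅bL 1, w⁆ := by
  conv_lhs => rw [← bL.sum_repr x]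
  simp only [Fin.sum_univ_two, add_lie, smul_lie, Module.Basis.coord_apply]

theorem Module.Basis.lie_eq_smul_zero_of_lie_one_zero (bL : Module.Basis (Fin 2) F L)
    (hHE : ⁅bL 1, bL 0⁆ = (2 : F) • bL 0) (x y : L) :
    ⁅x, y⁆ = (2 * (bL.coord 1 x * bL.coord 0 y - bL.coord 0 x * bL.coord 1 y)) • bL 0 := by
  have hEH : ⁅bL 0, bL 1⁆ = -((2 : F) • bL 0) := by rw [← lie_skew, hHE]
  rw [bL.lie_eq_coord_smul_add x y, ← lie_skew (bL 0), ← lie_skew (bL 1),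
    bL.lie_eq_coord_smul_add y (bL 0), bL.lie_eq_coord_smul_add y (bL 1)]
  simp only [lie_self, hHE, hEH]
  module

/-- `v` is the basis `v₀, …, vₘ` of the simple `sl₂`-module `V(m)`, on which `E` and `H` act by
`E vᵢ = i (m + 1 - i) vᵢ₋₁` and `H vᵢ = (m - 2i) vᵢ`. -/
structure IsStandardBasis {m : ℕ} (E H : L) (v : Module.Basis (Fin (m + 1)) F V) : Prop where
  lie_zero : ⁅E, v 0⁆ = 0
  lie_succ : ∀ k : Fin m, ⁅E, v k.succ⁆ = (((k : ℕ) + 1) * ((m : F) - k)) • v k.castSucc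
  lie_H : ∀ i : Fin (m + 1), ⁅H, v i⁆ = ((m : F) - 2 * (i : ℕ)) • v i

variable {E H : L}

theorem isStandardBasis_of_lie_eq {m : ℕ} (v : Module.Basis (Fin (m + 1)) F V)
    (hEv : ∀ i : Fin (m + 1),
      ⁅E, v i⁆ = (((i : ℕ) * (m + 1 - (i : ℕ)) : ℕ) : F) •
        (if 0 < (i : ℕ) then v ⟨(i : ℕ) - 1, lt_of_le_of_lt (Nat.sub_le _ _) i.isLt⟩ else 0))
    (hHv : ∀ i : Fin (m + 1), ⁅H, v i⁆ = ((m : F) - 2 * (i : ℕ)) • v i) :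
    IsStandardBasis E H v where
  lie_zero := by simpa using hEv 0
  lie_succ k := by
    simp only [hEv, Fin.val_succ, Nat.add_sub_cancel, Nat.add_sub_add_right,
      if_pos (Nat.succ_pos k)]
    push_cast [k.is_lt.le]
    rfl
  lie_H := hHv

theorem isStandardBasis_of_fin_two (v : Module.Basis (Fin 2) F V) (hE0 : ⁅E, v 0⁆ = 0)
    (hE1 : ⁅E, v 1⁆ = v 0) (hH0 : ⁅H, v 0⁆ = v 0) (hH1 : ⁅H, v 1⁆ = -v 1) :
    IsStandardBasis E H v where
  lie_zero := hE0
  lie_succ k := by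
    fin_cases k
    simpa using hE1
  lie_H i := by
    fin_cases i
    · simpa using hH0
    · norm_num [hH1]

namespace IsStandardBasis

section

variable {m : ℕ} {v : Module.Basis (Fin (m + 1)) F V}

theorem coord_lie_H (hv : IsStandardBasis E H v) (i : Fin (m + 1)) (w : V) :
    v.coord i ⁅H, w⁆ = ((m : F) - 2 * (i : ℕ)) * v.coord i w := by
  have : (v.coord i).comp (LieModule.toEnd F L V H : V →ₗ[F] V) =
      ((m : F) - 2 * (i : ℕ)) • v.coord i := v.ext fun j => by
    rcases eq_or_ne j i with rfl | hji <;> simp [hv.lie_H, *]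
  exact LinearMap.congr_fun this w

theorem coord_last_lie_E (hv : IsStandardBasis E H v) (w : V) :
    v.coord (Fin.last m) ⁅E, w⁆ = 0 := by
  have : (v.coord (Fin.last m)).comp (LieModule.toEnd F L V E : V →ₗ[F] V) = 0 :=
    v.ext fun j => by
      cases j using Fin.cases with
      | zero => simp [hv.lie_zero]
      | succ k => simp [hv.lie_succ, Fin.castSucc_ne_last]
  exact LinearMap.congr_fun this w

theorem coord_castSucc_lie_E (hv : IsStandardBasis E H v) (k : Fin m) (w : V) :
    v.coord k.castSucc ⁅E, w⁆ = (((k : ℕ) + 1) * ((m : F) - k)) * v.coord k.succ w := by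
  have : (v.coord k.castSucc).comp (LieModule.toEnd F L V E : V →ₗ[F] V) =
      (((k : ℕ) + 1) * ((m : F) - k)) • v.coord k.succ := v.ext fun j => by
    cases j using Fin.cases with
    | zero => simp [hv.lie_zero]
    | succ l => rcases eq_or_ne l k with rfl | hlk <;> simp [hv.lie_succ, *]
  exact LinearMap.congr_fun this w

end

theorem coord_mul_coord_last_eq_zero [CharZero F] (bL : Module.Basis (Fin 2) F L) {n : ℕ}
    {v : Module.Basis (Fin (n + 2)) F V} (hv : IsStandardBasis (bL 0) (bL 1) v)
    {x : L} {w : V} (h : ⁅x, w⁆ = 0) : bL.coord 0 x * v.coord (Fin.last (n + 1)) w = 0 := by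
  have hm : (n : F) + 1 ≠ 0 := by exact_mod_cast n.succ_ne_zero
  rw [bL.lie_eq_coord_smul_add] at h
  have hlast := congrArg (v.coord (Fin.last (n + 1))) h
  have hpred := congrArg (v.coord (Fin.last n).castSucc) h
  simp only [map_add, map_smul, map_zero, smul_eq_mul, hv.coord_last_lie_E, hv.coord_lie_H,
    hv.coord_castSucc_lie_E, Fin.succ_last] at hlast hpred
  push_cast at hlast hpred
  rcases eq_or_ne (bL.coord 1 x) 0 with hb | hb
  · rw [hb] at hpred
    exact (mul_eq_zero.mp (by linear_combination hpred : ((n : F) + 1) * _ = 0)).resolve_left hm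
  · have hα : v.coord (Fin.last (n + 1)) w = 0 := by
      have : bL.coord 1 x * ((n : F) + 1) * v.coord (Fin.last (n + 1)) w = 0 := by
        linear_combination -hlast
      exact (mul_eq_zero.mp this).resolve_left (mul_ne_zero hb hm)
    rw [hα, mul_zero]

theorem eq_two_of_isZAD [CharZero F] (bL : Module.Basis (Fin 2) F L) {n : ℕ}
    {v : Module.Basis (Fin (n + 2)) F V} (hv : IsStandardBasis (bL 0) (bL 1) v)
    (hV : IsZAD F L V) : n + 1 = 2 := by
  have hf : ∀ x w, ⁅x, w⁆ = 0 → (bL.coord 0).smulRight (v.coord (Fin.last (n + 1))) x w = 0 :=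
    fun _ _ h => hv.coord_mul_coord_last_eq_zero bL h
  -- with `m = n + 1`: both sides are `m (2 - m) vₘ₋₁`, and `f` takes the values `2 - m` and `0`
  have hlie : ⁅(1 - n : F) • bL 0, v (Fin.last (n + 1))⁆ =
      ⁅((n : F) + 1) • bL 1, v (Fin.last n).castSucc⁆ := by
    rw [smul_lie, smul_lie, ← Fin.succ_last, hv.lie_succ, hv.lie_H, smul_smul, smul_smul]
    congr 1
    simp only [Fin.val_castSucc, Fin.val_last, Nat.cast_add, Nat.cast_one]
    ring
  have key : (1 : F) - n = 0 := by simpa using hV.apply_eq_apply_of_lie_eq hf hlie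
  exact_mod_cast (by linear_combination -key : (n : F) + 1 = 2)

theorem isZAD (bL : Module.Basis (Fin 2) F L) {v : Module.Basis (Fin 3) F V}
    (hv : IsStandardBasis (bL 0) (bL 1) v) (h2 : (2 : F) ≠ 0) : IsZAD F L V := by
  set E := bL 0
  set H := bL 1
  have hE0 : ⁅E, v 0⁆ = 0 := hv.lie_zero
  have hE1 : ⁅E, v 1⁆ = (2 : F) • v 0 := by simpa using hv.lie_succ 0
  have hE2 : ⁅E, v 2⁆ = (2 : F) • v 1 := by have := hv.lie_succ 1; norm_num at this; exact this
  have hH0 : ⁅H, v 0⁆ = (2 : F) • v 0 := by simpa using hv.lie_H 0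
  have hH1 : ⁅H, v 1⁆ = 0 := by simpa using hv.lie_H 1
  have hH2 : ⁅H, v 2⁆ = (-2 : F) • v 2 := by norm_num [hv.lie_H 2]
  intro f hf
  have hfE0 : f E (v 0) = 0 := hf _ _ hE0
  have hfH1 : f H (v 1) = 0 := hf _ _ hH1
  have hfEH : f E (v 1) = f H (v 0) := by
    have h := hf (E + H) (v 1 - v 0) (by rw [add_lie, lie_sub, lie_sub, hE0, hE1, hH0, hH1]; module)
    simp only [map_add, map_sub, LinearMap.add_apply] at h
    linear_combination h + hfE0 - hfH1
  set Φ : V →ₗ[F] F := v.constr F ![f E (v 1) / 2, f E (v 2) / 2, -f H (v 2) / 2]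
  have hΦ : ∀ j, Φ (v j) = ![f E (v 1) / 2, f E (v 2) / 2, -f H (v 2) / 2] j :=
    v.constr_basis F _
  have hfE : ∀ j, f E (v j) = Φ ⁅E, v j⁆ := fun j => by
    fin_cases j <;> simp [hΦ, hE0, hE1, hE2, hfE0] <;> field_simp
  have hfH : ∀ j, f H (v j) = Φ ⁅H, v j⁆ := fun j => by
    fin_cases j <;> simp [hΦ, hH0, hH1, hH2, hfH1, hfEH] <;> field_simp
  have hf_eq : f = (LieModule.toEnd F L V : L →ₗ[F] Module.End F V).compr₂ Φ :=
    LinearMap.ext_basis bL v (Fin.forall_fin_two.mpr ⟨hfE, hfH⟩)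
  exact ⟨Φ.comp (lieActionSpan F L V).subtype, fun x w => LinearMap.congr_fun₂ hf_eq x w⟩

theorem coord_mul_coord_last_eq_of_lie_eq (bL : Module.Basis (Fin 2) F L)
    {v : Module.Basis (Fin 2) F V} (hHE : ⁅bL 1, bL 0⁆ = (2 : F) • bL 0)
    (hv : IsStandardBasis (bL 0) (bL 1) v) (h2 : (2 : F) ≠ 0) {x y : L} {p q : V}
    (hxy : ⁅x, y⁆ = 0) (hpq : ⁅x, q⁆ = ⁅y, p⁆) :
    bL.coord 0 x * v.coord (Fin.last 1) q = bL.coord 0 y * v.coord (Fin.last 1) p := by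
  have hL : bL.coord 1 x * bL.coord 0 y - bL.coord 0 x * bL.coord 1 y = 0 := by
    rw [bL.lie_eq_smul_zero_of_lie_one_zero hHE] at hxy
    exact (mul_eq_zero.mp ((smul_eq_zero.mp hxy).resolve_right (bL.ne_zero 0))).resolve_left h2
  rw [bL.lie_eq_coord_smul_add x q, bL.lie_eq_coord_smul_add y p] at hpq
  have hlast := congrArg (v.coord (Fin.last 1)) hpq
  have hfirst := congrArg (v.coord (Fin.castSucc 0)) hpq
  simp only [map_add, map_smul, smul_eq_mul, hv.coord_last_lie_E, hv.coord_lie_H,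
    hv.coord_castSucc_lie_E] at hlast hfirst
  simp only [Fin.val_zero, Fin.val_one, Fin.succ_zero_eq_one, Fin.castSucc_zero,
    show Fin.last 1 = 1 from rfl] at hlast hfirst ⊢
  push_cast at hlast hfirst
  rcases eq_or_ne (bL.coord 1 x) 0 with hx | hx
  · rcases eq_or_ne (bL.coord 1 y) 0 with hy | hy
    · rw [hx, hy] at hfirst
      linear_combination hfirst
    · refine mul_left_cancel₀ hy ?_
      linear_combination -(v.coord 1 q) * hL - bL.coord 0 y * hlast
  · refine mul_left_cancel₀ hx ?_
    linear_combination -(v.coord 1 p) * hL - bL.coord 0 x * hlast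

theorem not_isZPD_semidirectProduct (bL : Module.Basis (Fin 2) F L)
    {v : Module.Basis (Fin 2) F V} (hHE : ⁅bL 1, bL 0⁆ = (2 : F) • bL 0)
    (hv : IsStandardBasis (bL 0) (bL 1) v) (h2 : (2 : F) ≠ 0) :
    ¬ IsZPD F (SemidirectProduct' L V) := by
  intro hZ
  let B : SemidirectProduct' L V →ₗ[F] SemidirectProduct' L V →ₗ[F] F :=
    ((bL.coord 0).smulRight (v.coord (Fin.last 1))).compl₁₂
      (LinearMap.fst F L V) (LinearMap.snd F L V)
  have hB : ∀ x y, (B - B.flip) x y =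
      bL.coord 0 x.1 * v.coord (Fin.last 1) y.2 - bL.coord 0 y.1 * v.coord (Fin.last 1) x.2 :=
    fun _ _ => rfl
  have hf : ∀ x y, ⁅x, y⁆ = 0 → (B - B.flip) x y = 0 := by
    intro x y h
    rw [SemidirectProduct'.bracket_def] at h
    have := hv.coord_mul_coord_last_eq_of_lie_eq bL hHE h2 (congrArg Prod.fst h)
      (sub_eq_zero.mp (congrArg Prod.snd h))
    rw [hB, this, sub_self]
  have hlie : ⁅SemidirectProduct'.mk L V (bL 0) 0, SemidirectProduct'.mk L V 0 (v 1)⁆ =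
      ⁅SemidirectProduct'.mk L V (bL 1) 0, SemidirectProduct'.mk L V 0 (v 0)⁆ := by
    have h1 : ⁅bL 0, v 1⁆ = v 0 := by simpa using hv.lie_succ 0
    have h0 : ⁅bL 1, v 0⁆ = v 0 := by simpa using hv.lie_H 0
    rw [SemidirectProduct'.lie_mk, SemidirectProduct'.lie_mk, h0, h1]
    simp
  have key := hZ.apply_eq_apply_of_lie_eq hf hlie
  rw [hB, hB] at key
  simp [SemidirectProduct'.mk] at key

end IsStandardBasis

end

/-- let `b = ℂE ⊕ ℂH` be the Borel subalgebra of `sl₂(ℂ)` (so `⁅H,E⁆ = 2E`)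
and let `V(m)` be the `(m+1)`-dimensional simple `sl₂`-module restricted to `b`.  Then
`V(m)` is a zad `b`-module iff `m = 2`.  Consequently the `4`-dimensional aging algebra
`age(1) = b ⋉ V` (where `V` has basis `u, w` with `H·u = u`, `H·w = −w`, `E·w = u`,
`E·u = 0`) is not zpd. -/
theorem borel_module_zad_iff_and_aging_not_zpd :
    (∀ (m : ℕ), 1 ≤ m →
      ∀ (L : Type) [LieRing L] [LieAlgebra ℂ L]
        (V : Type) [AddCommGroup V] [Module ℂ V] [LieRingModule L V] [LieModule ℂ L V]
        (E H : L) (bL : Module.Basis (Fin 2) ℂ L), bL 0 = E → bL 1 = H →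
        ⁅H, E⁆ = (2 : ℂ) • E →
        ∀ (v : Module.Basis (Fin (m + 1)) ℂ V),
          (∀ i : Fin (m + 1),
            ⁅E, v i⁆ = (((i : ℕ) * (m + 1 - (i : ℕ)) : ℕ) : ℂ) •
              (if 0 < (i : ℕ)
                then v ⟨(i : ℕ) - 1, lt_of_le_of_lt (Nat.sub_le _ _) i.isLt⟩ else 0)) →
          (∀ i : Fin (m + 1), ⁅H, v i⁆ = ((m : ℂ) - 2 * (i : ℕ)) • v i) →
          (IsZAD ℂ L V ↔ m = 2)) ∧
    (∀ (L : Type) [LieRing L] [LieAlgebra ℂ L]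
      (V : Type) [AddCommGroup V] [Module ℂ V] [LieRingModule L V] [LieModule ℂ L V]
      (E H : L) (bL : Module.Basis (Fin 2) ℂ L), bL 0 = E → bL 1 = H →
      ⁅H, E⁆ = (2 : ℂ) • E →
      ∀ (u w : V) (bV : Module.Basis (Fin 2) ℂ V), bV 0 = u → bV 1 = w →
        ⁅H, u⁆ = u → ⁅H, w⁆ = -w → ⁅E, w⁆ = u → ⁅E, u⁆ = 0 →
        ¬ IsZPD ℂ (SemidirectProduct' L V)) := by
  constructor
  · intro m hm L _ _ V _ _ _ _ E H bL hE hH _ v hEv hHv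
    subst hE hH
    have hv := isStandardBasis_of_lie_eq v hEv hHv
    obtain ⟨n, rfl⟩ := Nat.exists_eq_add_of_le' hm
    refine ⟨hv.eq_two_of_isZAD bL, fun h => ?_⟩
    obtain rfl : n = 1 := by omega
    exact hv.isZAD bL two_ne_zero
  · intro L _ _ V _ _ _ _ E H bL hE hH hHE u w bV hu hw hHu hHw hEw hEu
    subst hE hH hu hw
    exact (isStandardBasis_of_fin_two bV hEu hEw hHu hHw).not_isZPD_semidirectProduct bL hHE
      two_ne_zero
end
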